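/- arXiv:2112.05725 — 6 statements merged into one kernel-verified Lean document; each statement's English description precedes it below -/
import Mathlib

section
/- Let S be a string over a finite alphabet Σ in which every letter of Σ appears at most 3 times. If S has a full-appearance LD-subsequence, then S has a full-appearance LD-subsequence in which every LD-block has length exactly 2. -/
/-- `IsBlockDecomp bs l` says that `bs = [(x₁,d₁),…,(x_k,d_k)]` is a decomposition of `l`
as an LD-string `x₁^{d₁} x₂^{d₂} ⋯ x_k^{d_k}` with `k ≥ 1`, adjacent letters distinct
(`x_j ≠ x_{j+1}`) and all exponents `d_i ≥ 2`. -/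
def IsBlockDecomp {α : Type*} (bs : List (α × ℕ)) (l : List α) : Prop :=
  bs ≠ [] ∧ (∀ p ∈ bs, 2 ≤ p.2) ∧ List.Chain' (fun p q => p.1 ≠ q.1) bs ∧
    l = (bs.map fun p => List.replicate p.2 p.1).flatten

/-- `l` is a letter-duplicated string (LD-string). -/
def IsLDString {α : Type*} (l : List α) : Prop :=
  ∃ bs : List (α × ℕ), IsBlockDecomp bs l

/-- `l` is an LD-subsequence of `S`: a subsequence of `S` that is an LD-string. -/
def IsLDSubseq {α : Type*} (l S : List α) : Prop :=
  l.Sublist S ∧ IsLDString l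

/- Truncating every LD-block of an LD-subsequence to its first two letters keeps it an
LD-subsequence (adjacent letters stay distinct, and a subword of each block is taken) and keeps
the set of letters that occur. -/

namespace List

variable {α : Type*}

theorem flatten_map_replicate_sublist {bs : List (α × ℕ)} {n : ℕ} (h : ∀ p ∈ bs, n ≤ p.2) :
    (bs.map fun p => replicate n p.1).flatten <+ (bs.map fun p => replicate p.2 p.1).flatten := by
  induction bs with
  | nil => simp
  | cons p bs ih =>
    simp only [map_cons, flatten_cons]
    exact ((replicate_sublist_replicate p.1).2 (h p mem_cons_self)).append
      (ih fun q hq => h q (mem_cons_of_mem _ hq))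

theorem mem_flatten_map_replicate {bs : List (α × ℕ)} {f : α × ℕ → ℕ} {a : α} :
    a ∈ (bs.map fun p => replicate (f p) p.1).flatten ↔ ∃ p ∈ bs, f p ≠ 0 ∧ p.1 = a := by
  simp only [mem_flatten, mem_map, exists_exists_and_eq_and, mem_replicate]
  exact exists_congr fun p => and_congr_right fun _ => and_congr_right fun _ => eq_comm

end List

open List

theorem IsBlockDecomp.withExponent {α : Type*} {bs : List (α × ℕ)} {l : List α}
    (h : IsBlockDecomp bs l) {n : ℕ} (hn : 2 ≤ n) :
    IsBlockDecomp (bs.map fun p => (p.1, n)) (bs.map fun p => replicate n p.1).flatten := by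
  obtain ⟨hne, -, hchain, -⟩ := h
  refine ⟨by simpa using hne, forall_mem_map.2 fun _ _ => hn, (isChain_map _).2 hchain, ?_⟩
  rw [map_map]
  rfl

theorem stmt_2_general {α : Type*} (S : List α)
    (hfeas : ∃ l : List α, IsLDSubseq l S ∧ ∀ a : α, a ∈ l) :
    ∃ (l : List α) (bs : List (α × ℕ)), l.Sublist S ∧ IsBlockDecomp bs l ∧
      (∀ p ∈ bs, p.2 = 2) ∧ ∀ a : α, a ∈ l := by
  obtain ⟨l, ⟨hsub, bs, hbs⟩, hall⟩ := hfeas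
  have hl := hbs.2.2.2
  refine ⟨_, _, (flatten_map_replicate_sublist hbs.2.1).trans (hl ▸ hsub), hbs.withExponent le_rfl,
    forall_mem_map.2 fun _ _ => rfl, fun a => ?_⟩
  obtain ⟨p, hp, -, rfl⟩ := mem_flatten_map_replicate.1 (hl ▸ hall a)
  exact mem_flatten_map_replicate.2 ⟨p, hp, two_ne_zero, rfl⟩

/-- If every letter of the (finite) alphabet appears at most 3 times in `S` and `S` has a
full-appearance LD-subsequence, then `S` has a full-appearance LD-subsequence all of whose
LD-blocks have length exactly 2. -/
theorem stmt_2 {α : Type*} [Fintype α] [DecidableEq α] (S : List α)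
    (hcount : ∀ a : α, S.count a ≤ 3)
    (hfeas : ∃ l : List α, IsLDSubseq l S ∧ ∀ a : α, a ∈ l) :
    ∃ (l : List α) (bs : List (α × ℕ)), l.Sublist S ∧ IsBlockDecomp bs l ∧
      (∀ p ∈ bs, p.2 = 2) ∧ ∀ a : α, a ∈ l :=
  stmt_2_general S hfeas
end

section
/- Let φ be an instance of (≤2,1,≤3)-SAT with clauses F₁, …, F_m and variables x₁, …, x_n, in which every variable is either a (1,1)-variable or a (2,1)-variable, and no clause contains both x_i and ¬x_i. Let S be the string constructed from φ as described below. Then φ is satisfiable if and only if S has a full-appearance LD-subsequence. -/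
/-- Data of a variable in a `(≤2,1,≤3)`-SAT instance with clauses indexed by `Fin m`:
a `(1,1)`-variable `one j k` occurs positively in clause `F_j` and negatively in `F_k`;
a `(2,1)`-variable `two j k l` occurs positively in `F_j` and `F_k` and negatively in `F_l`. -/
inductive VarInfo (m : ℕ) : Type
  | one (j k : Fin m) : VarInfo m
  | two (j k l : Fin m) : VarInfo m

/-- The list of (indices of) clauses in which a variable occurs. -/
def VarInfo.clauses {m : ℕ} : VarInfo m → List (Fin m)
  | .one j k => [j, k]
  | .two j k l => [j, k, l]

/-- `vi.satisfied c b`: assigning the Boolean value `b` to a variable with data `vi`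
satisfies clause `F_c` (via one of the literals of this variable). -/
def VarInfo.satisfied {m : ℕ} (vi : VarInfo m) (c : Fin m) (b : Bool) : Prop :=
  match vi with
  | .one j k => (c = j ∧ b = true) ∨ (c = k ∧ b = false)
  | .two j k l => ((c = j ∨ c = k) ∧ b = true) ∨ (c = l ∧ b = false)

/-- Whether a variable is a `(2,1)`-variable. -/
def VarInfo.isTwo {m : ℕ} : VarInfo m → Bool
  | .one _ _ => false
  | .two _ _ _ => true

/-- The gadget `L_i`: `F_j F_k F_k F_j` for a `(1,1)`-variable and
`F_j F_ℓ F_j F_k F_ℓ F_k` for a `(2,1)`-variable. -/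
def VarInfo.Lblock {m : ℕ} : VarInfo m → List (Fin m)
  | .one j k => [j, k, k, j]
  | .two j k l => [j, l, j, k, l, k]

/-- The string `S = g₁g₁L₁ g₂g₂L₂ ⋯ g_n g_n L_n g_{n+1}g_{n+1}` over the alphabet
`Σ = {F₁,…,F_m} ⊕ {g₁,…,g_{n+1}}`, built from the instance `v`. -/
def satString (m n : ℕ) (v : Fin n → VarInfo m) : List (Fin m ⊕ Fin (n + 1)) :=
  ((List.finRange n).map fun i =>
      Sum.inr i.castSucc :: Sum.inr i.castSucc :: (v i).Lblock.map Sum.inl).flatten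
    ++ [Sum.inr (Fin.last n), Sum.inr (Fin.last n)]

/-- The number of literals of clause `F_c` in the instance `v`. -/
def numLit (m n : ℕ) (v : Fin n → VarInfo m) (c : Fin m) : ℕ :=
  ∑ i : Fin n, (v i).clauses.count c

/-- `τ` is a satisfying truth assignment for the instance `v`: every clause is satisfied. -/
def SatAssignment (m n : ℕ) (v : Fin n → VarInfo m) (τ : Fin n → Bool) : Prop :=
  ∀ c : Fin m, ∃ i : Fin n, (v i).satisfied c (τ i)

/-!
Both copies of every separator `gᵢ` occur in `S`, so a full-appearance LD-subsequence keeps all of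
them and has the shape `g₁g₁t₁ ⋯ g_n g_n t_n g_{n+1}g_{n+1}`, where each `tᵢ` is a subsequence of
the gadget `Lᵢ` all of whose maximal runs of equal letters have length at least two. Inside
`F_j F_k F_k F_j` such a `tᵢ` cannot contain both `F_j` and `F_k`, and inside
`F_j F_ℓ F_j F_k F_ℓ F_k` it cannot contain `F_ℓ` together with `F_j` or `F_k`. Hence making `xᵢ`
false exactly when `tᵢ` contains the clause of `¬xᵢ` satisfies every clause, as every clause
letter lies in some `tᵢ`. Conversely, a satisfying assignment gives such a subsequence: keep in
each gadget the doubled letters of the clauses that `xᵢ` satisfies.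
-/

namespace List

variable {α β : Type*}

theorem splitBy_map (r : β → β → Bool) (f : α → β) (l : List α) :
    (l.map f).splitBy r = (l.splitBy fun a b => r (f a) (f b)).map (map f) := by
  rw [splitBy_eq_iff]
  refine ⟨by rw [← map_flatten, flatten_splitBy], by simp, ?_, ?_⟩
  · simp only [mem_map, forall_exists_index, and_imp, forall_apply_eq_imp_iff₂, isChain_map]
    exact fun g hg => isChain_of_mem_splitBy hg
  · refine isChain_map _ |>.mpr <| (isChain_getLast_head_splitBy _ l).imp ?_
    rintro a b ⟨ha, hb, h⟩
    exact ⟨by simpa using ha, by simpa using hb, by simpa [getLast_map, head_map] using h⟩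

theorem eq_cons_cons_append_of_sublist {a : α} {w r l : List α} (hl : l <+ a :: a :: (w ++ r))
    (ha : a ∉ w ++ r) (h2 : [a, a] <+ l) :
    ∃ t r', t <+ w ∧ r' <+ r ∧ l = a :: a :: (t ++ r') := by
  obtain ⟨l₁, l₂, rfl, h₁, h₂⟩ := sublist_append_iff.mp (show l <+ [a, a] ++ (w ++ r) from hl)
  have hl₁ : l₁ = [a, a] :=
    h₁.antisymm (h2.of_sublist_append_left (by simpa using fun h => ha (h₂.subset h)))
  obtain ⟨t, r', rfl, ht, hr⟩ := sublist_append_iff.mp h₂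
  exact ⟨t, r', ht, hr, by simp [hl₁]⟩

end List

open List Function

section LetterDuplicated

variable {α β : Type*}

theorem isLDString_flatMap_pair {xs : List α} (hne : xs ≠ []) (hxs : xs.IsChain (· ≠ ·)) :
    IsLDString (xs.flatMap fun x => [x, x]) :=
  ⟨xs.map fun x => (x, 2), by simpa using hne, by simp, isChain_map _ |>.mpr hxs, by
    simp [flatMap_def, Function.comp_def, replicate_succ]⟩

variable [DecidableEq α] [DecidableEq β]

/-- An LD-string without the nonemptiness condition, described through the maximal runs of equal
letters so that it is decidable. -/
def LetterDuplicated (l : List α) : Prop :=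
  ∀ g ∈ l.splitBy (fun a b => decide (a = b)), 2 ≤ g.length

instance : DecidablePred (LetterDuplicated (α := α)) :=
  fun l => inferInstanceAs (Decidable (∀ g ∈ l.splitBy _, 2 ≤ g.length))

theorem IsLDString.letterDuplicated {l : List α} (h : IsLDString l) : LetterDuplicated l := by
  obtain ⟨bs, -, hbs, hchain, rfl⟩ := h
  have hsplit : (bs.map fun p => replicate p.2 p.1).flatten.splitBy (fun a b => decide (a = b))
      = bs.map fun p => replicate p.2 p.1 := by
    rw [splitBy_eq_iff]
    refine ⟨rfl, ?_, ?_, ?_⟩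
    · simp only [mem_map, not_exists, not_and, replicate_eq_nil_iff]
      exact fun p hp h => by have := hbs p hp; omega
    · simp only [mem_map, forall_exists_index, and_imp, forall_apply_eq_imp_iff₂]
      exact fun p _ => isChain_replicate_of_rel _ (by simp)
    · refine isChain_map _ |>.mpr <| hchain.imp_of_mem_imp fun p q hp hq hpq => ?_
      have := hbs p hp
      have := hbs q hq
      exact ⟨by simp; omega, by simp; omega, by simpa using hpq⟩
  rw [LetterDuplicated, hsplit]
  simp only [mem_map]
  rintro _ ⟨p, hp, rfl⟩
  simpa using hbs p hp

theorem letterDuplicated_map_iff {f : α → β} (hf : Injective f) {l : List α} :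
    LetterDuplicated (l.map f) ↔ LetterDuplicated l := by
  simp [LetterDuplicated, splitBy_map, hf.eq_iff]

theorem letterDuplicated_append_iff {l m : List α}
    (h : ∀ x ∈ l.getLast?, ∀ y ∈ m.head?, x ≠ y) :
    LetterDuplicated (l ++ m) ↔ LetterDuplicated l ∧ LetterDuplicated m := by
  rw [LetterDuplicated, splitBy_append (by simpa using h)]
  exact forall_mem_append

/-- Cutting where the letter changes, as witnessed by `p`, preserves letter duplication. -/
theorem LetterDuplicated.of_append_append {p : α → Prop} {a b c : List α}
    (h : LetterDuplicated (a ++ b ++ c)) (hb : ∀ x ∈ b, p x)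
    (ha : ∀ x ∈ a.getLast?, ¬ p x) (hc : ∀ x ∈ c.head?, ¬ p x) : LetterDuplicated b := by
  rcases eq_or_ne b [] with rfl | hne
  · simp [LetterDuplicated]
  rw [append_assoc, letterDuplicated_append_iff, letterDuplicated_append_iff] at h
  · exact h.2.1
  · exact fun x hx y hy hxy => hc y hy (hxy ▸ hb x (mem_of_mem_getLast? hx))
  · intro x hx y hy hxy
    rw [head?_append_of_ne_nil _ hne] at hy
    exact ha x hx (hxy ▸ hb y (mem_of_mem_head? hy))

theorem LetterDuplicated.pair_sublist {l : List α} (h : LetterDuplicated l) {x : α}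
    (hx : x ∈ l) : [x, x] <+ l := by
  rw [← flatten_splitBy (fun a b => decide (a = b)) l, mem_flatten] at hx
  obtain ⟨g, hg, hxg⟩ := hx
  have hrep : g = replicate g.length x := by
    have hchain : g.IsChain (· = ·) := (isChain_of_mem_splitBy hg).imp (by simp)
    cases g with
    | nil => simp at hxg
    | cons a g' =>
      have hg' := isChain_cons_eq_iff_eq_replicate.mp hchain
      obtain rfl : x = a := (mem_cons.mp hxg).elim id fun h => eq_of_mem_replicate (hg' ▸ h)
      rw [length_cons, replicate_succ, ← hg']
  calc [x, x] = replicate 2 x := rfl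
    _ <+ replicate g.length x := replicate_sublist_replicate _ |>.mpr (h g hg)
    _ = g := hrep.symm
    _ <+ l := by
      conv_rhs => rw [← flatten_splitBy (fun a b => decide (a = b)) l]
      exact sublist_flatten_of_mem hg

theorem LetterDuplicated.exists_eq_map_of_sublist_map {ι : Type*} [DecidableEq ι] {f : ι → α}
    (hf : Injective f) {L : List ι} {t : List α} (ht : t <+ L.map f) (hd : LetterDuplicated t) :
    ∃ u, u <+ L ∧ LetterDuplicated u ∧ t = u.map f := by
  obtain ⟨u, hu, rfl⟩ := sublist_map_iff.mp ht
  exact ⟨u, hu, (letterDuplicated_map_iff hf).mp hd, rfl⟩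

theorem LetterDuplicated.not_mem_of_sublist_oneGadget {j k : α} (hjk : j ≠ k) {t : List α}
    (ht : t <+ [j, k, k, j]) (hd : LetterDuplicated t) (hj : j ∈ t) : k ∉ t := by
  have hf : Injective ![j, k] := injective_pair_iff_ne.mpr hjk
  obtain ⟨u, hu, hdu, rfl⟩ := hd.exists_eq_map_of_sublist_map hf (L := [0, 1, 1, 0]) ht
  have key : ∀ u ∈ ([0, 1, 1, 0] : List (Fin 2)).sublists, LetterDuplicated u → 0 ∈ u → 1 ∉ u := by
    decide
  exact (mem_map_of_injective hf).not.mpr <|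
    key u (mem_sublists.mpr hu) hdu <| (mem_map_of_injective (a := 0) hf).mp hj

theorem LetterDuplicated.not_mem_of_sublist_twoGadget {j k l : α} (hjk : j ≠ k) (hjl : j ≠ l)
    (hkl : k ≠ l) {t : List α} (ht : t <+ [j, l, j, k, l, k]) (hd : LetterDuplicated t)
    (hl : l ∈ t) : j ∉ t ∧ k ∉ t := by
  have hf : Injective ![j, k, l] := by
    simp [Injective, Fin.forall_fin_succ, hjk, hjl, hkl, hjk.symm, hjl.symm, hkl.symm]
  obtain ⟨u, hu, hdu, rfl⟩ := hd.exists_eq_map_of_sublist_map hf (L := [0, 2, 0, 1, 2, 1]) ht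
  have key : ∀ u ∈ ([0, 2, 0, 1, 2, 1] : List (Fin 3)).sublists, LetterDuplicated u → 2 ∈ u →
      0 ∉ u ∧ 1 ∉ u := by
    decide
  have := key u (mem_sublists.mpr hu) hdu <| (mem_map_of_injective (a := 2) hf).mp hl
  exact ⟨(mem_map_of_injective (a := 0) hf).not.mpr this.1,
    (mem_map_of_injective (a := 1) hf).not.mpr this.2⟩

end LetterDuplicated

namespace VarInfo

variable {m : ℕ}

def negClause : VarInfo m → Fin m
  | .one _ k => k
  | .two _ _ l => l

def satisfiedClauses : VarInfo m → Bool → List (Fin m)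
  | .one j _, true => [j]
  | .one _ k, false => [k]
  | .two j k _, true => [j, k]
  | .two _ _ l, false => [l]

theorem mem_satisfiedClauses {vi : VarInfo m} {c : Fin m} {b : Bool} :
    c ∈ vi.satisfiedClauses b ↔ vi.satisfied c b := by
  cases vi <;> cases b <;> simp [satisfiedClauses, satisfied]

theorem satisfiedClauses_ne_nil (vi : VarInfo m) (b : Bool) : vi.satisfiedClauses b ≠ [] := by
  cases vi <;> cases b <;> simp [satisfiedClauses]

theorem isChain_satisfiedClauses {vi : VarInfo m} (hvi : vi.clauses.Nodup) (b : Bool) :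
    (vi.satisfiedClauses b).IsChain (· ≠ ·) := by
  cases vi <;> cases b <;> simp_all [satisfiedClauses, clauses]

theorem flatMap_satisfiedClauses_sublist (vi : VarInfo m) (b : Bool) :
    (vi.satisfiedClauses b).flatMap (fun c => [c, c]) <+ vi.Lblock := by
  cases vi <;> cases b <;> simp [satisfiedClauses, Lblock]

theorem satisfied_of_mem {vi : VarInfo m} (hvi : vi.clauses.Nodup) {t : List (Fin m)}
    (ht : t <+ vi.Lblock) (hd : LetterDuplicated t) {c : Fin m} (hc : c ∈ t) :
    vi.satisfied c (decide (vi.negClause ∉ t)) := by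
  cases vi with
  | one j k =>
    have hjk : j ≠ k := by simpa [clauses] using hvi
    have hc' : c = j ∨ c = k := by
      have := ht.subset hc
      simp only [Lblock, mem_cons, not_mem_nil, or_false] at this
      tauto
    rcases hc' with rfl | rfl
    · simp [satisfied, negClause, hd.not_mem_of_sublist_oneGadget hjk ht hc]
    · simp [satisfied, negClause, hc]
  | two j k l =>
    obtain ⟨⟨hjk, hjl⟩, hkl⟩ : (j ≠ k ∧ j ≠ l) ∧ k ≠ l := by simpa [clauses] using hvi
    have hc' : c = j ∨ c = l ∨ c = k := by
      have := ht.subset hc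
      simp only [Lblock, mem_cons, not_mem_nil, or_false] at this
      tauto
    by_cases hl : l ∈ t
    · obtain ⟨hj, hk⟩ := hd.not_mem_of_sublist_twoGadget hjk hjl hkl ht hl
      obtain rfl : c = l := by rcases hc' with rfl | rfl | rfl <;> trivial
      simp [satisfied, negClause, hl]
    · have : c = j ∨ c = k := by rcases hc' with h | rfl | h <;> simp_all
      simp [satisfied, negClause, hl, this]

end VarInfo

section GadgetString

open Sum

variable {m n : ℕ}

def gadgetBlock (w : Fin n → List (Fin m)) (i : Fin n) : List (Fin m ⊕ Fin (n + 1)) :=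
  inr i.castSucc :: inr i.castSucc :: (w i).map inl

/-- The string `g₁g₁w₁ g₂g₂w₂ ⋯ g_n g_n w_n g_{n+1}g_{n+1}` for arbitrary words `wᵢ`. -/
def gadgetString (w : Fin n → List (Fin m)) : List (Fin m ⊕ Fin (n + 1)) :=
  ((finRange n).map (gadgetBlock w)).flatten ++ [inr (Fin.last n), inr (Fin.last n)]

theorem satString_eq_gadgetString (v : Fin n → VarInfo m) :
    satString m n v = gadgetString fun i => (v i).Lblock :=
  rfl

theorem gadgetString_sublist_gadgetString {t w : Fin n → List (Fin m)} (h : ∀ i, t i <+ w i) :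
    gadgetString t <+ gadgetString w := by
  simp only [gadgetString, ← flatMap_def]
  exact (Sublist.flatMap_right _ fun i _ =>
    ((h i).map inl).cons_cons _ |>.cons_cons _).append_right _

theorem inr_mem_gadgetString (t : Fin n → List (Fin m)) (s : Fin (n + 1)) :
    inr s ∈ gadgetString t := by
  induction s using Fin.lastCases with
  | last => simp [gadgetString]
  | cast i => simp [gadgetString, gadgetBlock]

theorem inl_mem_gadgetString {t : Fin n → List (Fin m)} {c : Fin m} :
    inl c ∈ gadgetString t ↔ ∃ i, c ∈ t i := by
  simp [gadgetString, gadgetBlock]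

theorem exists_eq_flatten_gadgetBlock_of_sublist (w : Fin n → List (Fin m)) (is : List (Fin n))
    (his : is.Nodup) {l : List (Fin m ⊕ Fin (n + 1))}
    (hl : l <+ (is.map (gadgetBlock w)).flatten ++ [inr (Fin.last n), inr (Fin.last n)])
    (hsep : ∀ i ∈ is, [inr i.castSucc, inr i.castSucc] <+ l)
    (hlast : [inr (Fin.last n), inr (Fin.last n)] <+ l) :
    ∃ t : Fin n → List (Fin m), (∀ i, t i <+ w i) ∧
      l = (is.map (gadgetBlock t)).flatten ++ [inr (Fin.last n), inr (Fin.last n)] := by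
  induction is generalizing l with
  | nil => exact ⟨fun _ => [], by simp, by simpa using hl.antisymm hlast⟩
  | cons i is ih =>
    obtain ⟨hi, his⟩ := nodup_cons.mp his
    obtain ⟨r₀, r, hr₀, hr, rfl⟩ := eq_cons_cons_append_of_sublist
      (by simpa [gadgetBlock] using hl) (by simpa [gadgetBlock] using hi) (hsep i mem_cons_self)
    obtain ⟨u, hu, rfl⟩ := sublist_map_iff.mp hr₀
    have hsep' : ∀ s, s ≠ i.castSucc → [inr s, inr s] <+ inr i.castSucc :: inr i.castSucc ::
        (u.map inl ++ r) → [inr s, inr s] <+ r := fun s hs h =>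
      Sublist.of_sublist_append_right (l₁ := inr i.castSucc :: inr i.castSucc :: u.map inl)
        (by simp [hs]) (by simpa using h)
    obtain ⟨t, ht, rfl⟩ := ih his hr
      (fun j hj => hsep' _ (by rintro h; exact hi (Fin.castSucc_inj.mp h ▸ hj))
        (hsep j (mem_cons_of_mem _ hj)))
      (hsep' _ (Fin.castSucc_lt_last i).ne' hlast)
    refine ⟨update t i u, fun j => ?_, ?_⟩
    · rcases eq_or_ne j i with rfl | hj
      · simpa using hu
      · simpa [hj] using ht j
    · have : is.map (gadgetBlock (update t i u)) = is.map (gadgetBlock t) :=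
        map_congr_left fun j hj => by
          simp [gadgetBlock, update_of_ne (show j ≠ i by rintro rfl; exact hi hj)]
      simp [gadgetBlock, this]

theorem exists_eq_gadgetString_of_sublist {w : Fin n → List (Fin m)}
    {l : List (Fin m ⊕ Fin (n + 1))} (hl : l <+ gadgetString w)
    (hsep : ∀ s, [inr s, inr s] <+ l) :
    ∃ t : Fin n → List (Fin m), (∀ i, t i <+ w i) ∧ l = gadgetString t :=
  exists_eq_flatten_gadgetBlock_of_sublist w _ (nodup_finRange n) hl (fun _ _ => hsep _) (hsep _)

theorem LetterDuplicated.of_gadgetString {t : Fin n → List (Fin m)}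
    (h : LetterDuplicated (gadgetString t)) (i : Fin n) : LetterDuplicated (t i) := by
  obtain ⟨A, B, hAB⟩ := append_of_mem (mem_finRange i)
  have hsplit : gadgetString t = ((A.map (gadgetBlock t)).flatten ++
      [inr i.castSucc, inr i.castSucc]) ++ (t i).map inl ++
      ((B.map (gadgetBlock t)).flatten ++ [inr (Fin.last n), inr (Fin.last n)]) := by
    simp [gadgetString, hAB, gadgetBlock]
  rw [hsplit] at h
  refine (letterDuplicated_map_iff inl_injective).mp <|
    h.of_append_append (p := fun x => x.isLeft) (by simp) (by simp) ?_
  cases B <;> simp [gadgetBlock]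

theorem gadgetString_flatMap_pair (p : Fin n → List (Fin m)) :
    gadgetString (fun i => (p i).flatMap fun c => [c, c]) =
      (((finRange n).flatMap fun i : Fin n => inr i.castSucc :: (p i).map inl) ++
        [inr (Fin.last n)]).flatMap fun x => [x, x] := by
  simp only [gadgetString, ← flatMap_def, flatMap_append, flatMap_assoc]
  congr 1
  refine flatMap_congr fun i _ => ?_
  simp [gadgetBlock, map_flatMap, flatMap_map]

theorem isChain_ne_flatMap_separated {p : Fin n → List (Fin m)} (hne : ∀ i, p i ≠ [])
    (hp : ∀ i, (p i).IsChain (· ≠ ·)) (is : List (Fin n)) :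
    ((is.flatMap fun i : Fin n => inr i.castSucc :: (p i).map inl) ++
      [inr (Fin.last n)]).IsChain (· ≠ ·) := by
  induction is with
  | nil => simp
  | cons i is ih =>
    rw [flatMap_cons, append_assoc, isChain_append]
    refine ⟨?_, ih, ?_⟩
    · exact isChain_cons.mpr ⟨by simp, (isChain_map _).mpr ((hp i).imp (by simp))⟩
    · intro x hx y hy
      obtain ⟨L, c, hc⟩ := (p i).eq_nil_or_concat.resolve_left (hne i)
      have hlast : (inr i.castSucc :: (p i).map inl).getLast? = some (inl c) := by
        rw [hc, concat_eq_append, map_append, ← cons_append, map_singleton, getLast?_concat]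
      obtain rfl : x = inl c := by simpa [hlast] using hx.symm
      cases is <;> simp at hy <;> simp [← hy]

theorem isLDString_gadgetString_flatMap_pair {p : Fin n → List (Fin m)} (hne : ∀ i, p i ≠ [])
    (hp : ∀ i, (p i).IsChain (· ≠ ·)) :
    IsLDString (gadgetString fun i => (p i).flatMap fun c => [c, c]) := by
  rw [gadgetString_flatMap_pair]
  exact isLDString_flatMap_pair (by simp) (isChain_ne_flatMap_separated hne hp _)

end GadgetString

theorem stmt_9_general (m n : ℕ) (v : Fin n → VarInfo m)
    (hnodup : ∀ i : Fin n, (v i).clauses.Nodup) :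
    (∃ τ : Fin n → Bool, SatAssignment m n v τ) ↔
      ∃ l : List (Fin m ⊕ Fin (n + 1)), IsLDSubseq l (satString m n v) ∧
        ∀ a : Fin m ⊕ Fin (n + 1), a ∈ l := by
  rw [satString_eq_gadgetString]
  constructor
  · rintro ⟨τ, hτ⟩
    refine ⟨gadgetString fun i => ((v i).satisfiedClauses (τ i)).flatMap fun c => [c, c],
      ⟨?_, ?_⟩, ?_⟩
    · exact gadgetString_sublist_gadgetString fun i =>
        (v i).flatMap_satisfiedClauses_sublist (τ i)
    · exact isLDString_gadgetString_flatMap_pair (fun i => (v i).satisfiedClauses_ne_nil _)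
        fun i => VarInfo.isChain_satisfiedClauses (hnodup i) _
    · rintro (c | s)
      · obtain ⟨i, hi⟩ := hτ c
        exact inl_mem_gadgetString.mpr ⟨i, mem_flatMap.mpr
          ⟨c, VarInfo.mem_satisfiedClauses.mpr hi, mem_cons_self⟩⟩
      · exact inr_mem_gadgetString _ s
  · rintro ⟨l, ⟨hsub, hLD⟩, hfull⟩
    have hdup := hLD.letterDuplicated
    obtain ⟨t, ht, rfl⟩ :=
      exists_eq_gadgetString_of_sublist hsub fun s => hdup.pair_sublist (hfull _)
    refine ⟨fun i => decide ((v i).negClause ∉ t i), fun c => ?_⟩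
    obtain ⟨i, hi⟩ := inl_mem_gadgetString.mp (hfull (Sum.inl c))
    exact ⟨i, VarInfo.satisfied_of_mem (hnodup i) (ht i) (hdup.of_gadgetString i) hi⟩

/-- `φ` is satisfiable iff the constructed string `S` has a full-appearance
LD-subsequence. -/
theorem stmt_9 (m n : ℕ) (v : Fin n → VarInfo m)
    (hnodup : ∀ i : Fin n, (v i).clauses.Nodup)
    (hclause : ∀ c : Fin m, 2 ≤ numLit m n v c ∧ numLit m n v c ≤ 3) :
    (∃ τ : Fin n → Bool, SatAssignment m n v τ) ↔
      ∃ l : List (Fin m ⊕ Fin (n + 1)), IsLDSubseq l (satString m n v) ∧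
        ∀ a : Fin m ⊕ Fin (n + 1), a ∈ l :=
  stmt_9_general m n v hnodup
end

section
/- Let φ be an instance of (≤2,1,≤3)-SAT with clauses F₁, …, F_m and variables x₁, …, x_n, in which every variable is either a (1,1)-variable or a (2,1)-variable, and no clause contains both x_i and ¬x_i. Let S be the string constructed from φ as described below, and let K ≥ 0 be an integer. Then S has a full-appearance LD-subsequence of length at least 4n + 2 + 2K if and only if φ has a satisfying truth assignment in which at least K of the (2,1)-variables are assigned True. (For a satisfying assignment with K₁ (2,1)-variables True, K₂ (2,1)-variables False, and J (1,1)-variables, the corresponding solution has length 2(n+1) + 4K₁ + 2K₂ + 2J = 4n + 2 + 2K₁.) -/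
namespace List

variable {β : Type*}

theorem Sublist.length_le_length_filter {s t : List β} (h : s <+ t) {p : β → Bool}
    (hp : ∀ x ∈ s, p x) : s.length ≤ (t.filter p).length := by
  simpa [filter_eq_self.mpr hp] using (h.filter p).length_le

theorem Sublist.exists_eq_cons_cons [BEq β] [LawfulBEq β] {r B : List β} {g : β}
    (hr : r <+ g :: g :: B) (hB : g ∉ B) (hg : 2 ≤ r.count g) : ∃ t, r = g :: g :: t ∧ t <+ B := by
  have hB0 : B.count g = 0 := count_eq_zero.mpr hB
  cases hr with
  | cons _ hr =>
    cases hr with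
    | cons _ hr => have := hr.count_le g; omega
    | cons_cons _ hr => have := hr.count_le g; simp only [count_cons_self] at hg; omega
  | cons_cons _ hr =>
    cases hr with
    | cons _ hr => have := hr.count_le g; simp only [count_cons_self] at hg; omega
    | cons_cons _ hr => exact ⟨_, rfl, hr⟩

/-- `pair` has no side condition `l.head? ≠ some a`: runs may merge, which makes the class closed
under `++` and `filter`. -/
inductive RunsAtLeastTwo : List β → Prop
  | nil : RunsAtLeastTwo []
  | pair (a : β) {l : List β} : RunsAtLeastTwo l → RunsAtLeastTwo (a :: a :: l)
  | dup (a : β) {l : List β} : RunsAtLeastTwo (a :: l) → RunsAtLeastTwo (a :: a :: l)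

namespace RunsAtLeastTwo

theorem head?_eq {a : β} {l : List β} (h : RunsAtLeastTwo (a :: l)) : l.head? = some a := by
  cases h <;> rfl

theorem replicate (a : β) {d : ℕ} (hd : 2 ≤ d) : RunsAtLeastTwo (replicate d a) := by
  induction d, hd using Nat.le_induction with
  | base => exact pair a nil
  | succ d hd ih =>
    obtain ⟨e, rfl⟩ : ∃ e, d = e + 1 := ⟨d - 1, by omega⟩
    exact dup a ih

theorem append {u w : List β} (hu : RunsAtLeastTwo u) (hw : RunsAtLeastTwo w) :
    RunsAtLeastTwo (u ++ w) := by
  induction hu with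
  | nil => exact hw
  | pair a _ ih => exact pair a ih
  | dup a _ ih => exact dup a ih

theorem filter (p : β → Bool) {l : List β} (h : RunsAtLeastTwo l) :
    RunsAtLeastTwo (l.filter p) := by
  induction h with
  | nil => exact nil
  | pair a _ ih => by_cases ha : p a <;> simp [ha, pair a ih, ih]
  | dup a _ ih =>
    by_cases ha : p a
    · simp only [filter_cons, ha, if_true] at ih ⊢; exact dup a ih
    · simpa [filter_cons, ha] using ih

theorem two_le_count [BEq β] [LawfulBEq β] {l : List β} (h : RunsAtLeastTwo l) {x : β}
    (hx : x ∈ l) : 2 ≤ l.count x := by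
  induction h with
  | nil => simp at hx
  | pair a _ ih =>
    by_cases hxa : x = a
    · subst hxa; simp
    · simp only [mem_cons, hxa, false_or] at hx
      simp [Ne.symm hxa, ih hx]
  | dup a _ ih =>
    by_cases hxa : x = a
    · subst hxa; simp
    · simpa [count_cons, Ne.symm hxa] using ih (mem_cons_of_mem a (by simpa [hxa] using hx))

theorem flatten {L : List (List β)} (h : ∀ l ∈ L, RunsAtLeastTwo l) : RunsAtLeastTwo L.flatten := by
  induction L with
  | nil => exact nil
  | cons l L ih => exact (h l (by simp)).append (ih fun l' hl' => h l' (by simp [hl']))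

theorem of_append_cons_cons {s t : List β} {g : β}
    (h : RunsAtLeastTwo (s ++ g :: g :: t)) (hs : g ∉ s) (ht : g ∉ t) :
    RunsAtLeastTwo s ∧ RunsAtLeastTwo t := by
  generalize hx : s ++ g :: g :: t = x at h
  induction h generalizing s with
  | nil => simp at hx
  | pair a hl ih =>
    match s, hx with
    | [], hx => simp at hx; obtain ⟨rfl, rfl⟩ := hx; exact ⟨nil, hl⟩
    | [b], hx => simp at hx; simp_all
    | b :: c :: s, hx =>
      simp only [cons_append, cons.injEq] at hx
      obtain ⟨rfl, rfl, rfl⟩ := hx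
      exact ⟨pair _ (ih (by simp_all) rfl).1, (ih (by simp_all) rfl).2⟩
  | dup a hl ih =>
    match s, hx with
    | [], hx =>
      simp at hx; obtain ⟨rfl, rfl⟩ := hx
      exact absurd (mem_of_mem_head? hl.head?_eq) ht
    | [b], hx => simp at hx; simp_all
    | b :: c :: s, hx =>
      simp only [cons_append, cons.injEq] at hx
      obtain ⟨rfl, rfl, rfl⟩ := hx
      have := ih (s := _ :: s) (by simp_all) rfl
      exact ⟨dup _ this.1, this.2⟩

theorem not_interleaved [DecidableEq β] {s t u : List β} {a b : β} (hs : RunsAtLeastTwo s)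
    (hst : s <+ t) (ha : a ∈ s) (hb : b ∈ s) (hab : a ≠ b) (hta : t.count a ≤ 2)
    (htb : t.count b ≤ 2) (ht : t.filter (· ∈ [a, b]) = a :: b :: u) : False := by
  -- `a` and `b` are as frequent in `s` as in `t`, so `s` restricted to `{a, b}` is `a :: b :: u`,
  -- whose first run is too short.
  have hcount : ∀ x ∈ [a, b], s.count x = t.count x := by
    simp only [mem_cons, not_mem_nil, or_false, forall_eq_or_imp, forall_eq]
    exact ⟨(hst.count_le a).antisymm (hta.trans (hs.two_le_count ha)),
      (hst.count_le b).antisymm (htb.trans (hs.two_le_count hb))⟩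
  have hperm : s.filter (· ∈ [a, b]) ~ t.filter (· ∈ [a, b]) := by
    refine perm_iff_count.mpr fun x => ?_
    by_cases hx : x ∈ [a, b]
    · rw [count_filter (by simpa using hx), count_filter (by simpa using hx), hcount x hx]
    · rw [count_eq_zero.mpr (fun h => hx (by simpa using (mem_filter.mp h).2)),
        count_eq_zero.mpr (fun h => hx (by simpa using (mem_filter.mp h).2))]
  have heq := (hst.filter _).eq_of_length hperm.length_eq
  have hrun := hs.filter (· ∈ [a, b])
  rw [heq, ht] at hrun
  exact hab (Option.some.inj hrun.head?_eq).symm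

theorem exists_eq_append_cons_cons [DecidableEq β] {l A B : List β} {g : β}
    (hl : RunsAtLeastTwo l) (hsub : l <+ A ++ g :: g :: B) (hA : g ∉ A) (hB : g ∉ B)
    (hg : g ∈ l) :
    ∃ s t, l = s ++ g :: g :: t ∧ s <+ A ∧ t <+ B ∧ RunsAtLeastTwo s ∧ RunsAtLeastTwo t := by
  obtain ⟨s, r, rfl, hs, hr⟩ := sublist_append_iff.mp hsub
  have hgs : g ∉ s := fun h => hA (hs.subset h)
  have hcount : 2 ≤ r.count g := by
    simpa [count_eq_zero.mpr hgs] using hl.two_le_count hg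
  obtain ⟨t, rfl, ht⟩ := hr.exists_eq_cons_cons hB hcount
  obtain ⟨hRs, hRt⟩ := hl.of_append_cons_cons hgs (fun h => hB (ht.subset h))
  exact ⟨s, t, rfl, hs, ht, hRs, hRt⟩

end RunsAtLeastTwo

def sepConcat {k : ℕ} (g : Fin k → β) (L : Fin k → List β) : List β :=
  (ofFn fun i => g i :: g i :: L i).flatten

theorem sepConcat_succ {k : ℕ} (g : Fin (k + 1) → β) (L : Fin (k + 1) → List β) :
    sepConcat g L = g 0 :: g 0 :: (L 0 ++ sepConcat (fun i => g i.succ) (fun i => L i.succ)) := by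
  simp [sepConcat, ofFn_succ]

theorem mem_sepConcat {k : ℕ} {g : Fin k → β} {L : Fin k → List β} {x : β} :
    x ∈ sepConcat g L ↔ ∃ i, x = g i ∨ x ∈ L i := by
  simp [sepConcat, mem_flatten, mem_ofFn]

theorem length_sepConcat {k : ℕ} (g : Fin k → β) (L : Fin k → List β) :
    (sepConcat g L).length = ∑ i, ((L i).length + 2) := by
  simp [sepConcat, length_flatten, sum_ofFn]

theorem sepConcat_sublist_sepConcat {k : ℕ} (g : Fin k → β) {L L' : Fin k → List β}
    (h : ∀ i, L i <+ L' i) : sepConcat g L <+ sepConcat g L' := by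
  induction k with
  | zero => simp [sepConcat]
  | succ k ih =>
    rw [sepConcat_succ, sepConcat_succ]
    exact ((h 0).append (ih _ fun i => h i.succ)).cons_cons _ |>.cons_cons _

theorem RunsAtLeastTwo.sepConcat {k : ℕ} (g : Fin k → β) {L : Fin k → List β}
    (h : ∀ i, RunsAtLeastTwo (L i)) : RunsAtLeastTwo (sepConcat g L) :=
  flatten fun _ hl => by
    obtain ⟨i, rfl⟩ := mem_ofFn.mp hl
    exact pair _ (h i)

theorem RunsAtLeastTwo.exists_eq_append_sepConcat [DecidableEq β] {k : ℕ} {g : Fin k → β}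
    {L : Fin k → List β} (hg : Function.Injective g) (hgL : ∀ i j, g i ∉ L j) {A l : List β}
    (hgA : ∀ i, g i ∉ A) (hl : RunsAtLeastTwo l) (hsub : l <+ A ++ List.sepConcat g L)
    (hmem : ∀ i, g i ∈ l) :
    ∃ s σ, l = s ++ List.sepConcat g σ ∧ s <+ A ∧ RunsAtLeastTwo s ∧
      ∀ i, σ i <+ L i ∧ RunsAtLeastTwo (σ i) := by
  induction k generalizing A l with
  | zero => exact ⟨l, Fin.elim0, by simp [List.sepConcat], by simpa [List.sepConcat] using hsub, hl,
      fun i => i.elim0⟩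
  | succ k ih =>
    rw [sepConcat_succ] at hsub
    have hg0 : g 0 ∉ L 0 ++ List.sepConcat (fun i => g i.succ) (fun i => L i.succ) := by
      simp only [mem_append, mem_sepConcat, not_or, not_exists]
      exact ⟨hgL 0 0, fun i => ⟨fun h => Fin.succ_ne_zero i (hg h).symm, hgL 0 i.succ⟩⟩
    obtain ⟨s, t, rfl, hs, ht, hRs, hRt⟩ :=
      exists_eq_append_cons_cons hl hsub (hgA 0) hg0 (hmem 0)
    have hmem' : ∀ i : Fin k, g i.succ ∈ t := fun i => by
      have := hmem i.succ
      simp only [mem_append, mem_cons] at this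
      rcases this with h | h | h | h
      · exact absurd (hs.subset h) (hgA _)
      · exact absurd (hg h) (Fin.succ_ne_zero i)
      · exact absurd (hg h) (Fin.succ_ne_zero i)
      · exact h
    obtain ⟨s', σ, rfl, hs', hRs', hσ⟩ :=
      ih (g := fun i : Fin k => g i.succ) (L := fun i : Fin k => L i.succ)
        (fun i j h => Fin.succ_injective _ (hg h)) (fun i j => hgL _ _) (fun i => hgL _ _)
        hRt ht hmem'
    refine ⟨s, Fin.cons s' σ, ?_, hs, hRs, Fin.cases ⟨hs', hRs'⟩ hσ⟩
    simp [sepConcat_succ]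

end List

open List

theorem IsBlockDecomp.head?_eq {β : Type*} {p : β × ℕ} {bs : List (β × ℕ)} {l : List β}
    (h : IsBlockDecomp (p :: bs) l) : l.head? = some p.1 := by
  obtain ⟨-, h2, -, rfl⟩ := h
  obtain ⟨d, hd⟩ : ∃ d, p.2 = d + 1 := ⟨p.2 - 1, by have := h2 p (by simp); omega⟩
  simp [hd, replicate_succ]

theorem IsBlockDecomp.replicate_append {β : Type*} {p : β × ℕ} {bs : List (β × ℕ)} {l : List β}
    (h : IsBlockDecomp (p :: bs) l) (e : ℕ) :
    IsBlockDecomp ((p.1, p.2 + e) :: bs) (replicate e p.1 ++ l) := by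
  obtain ⟨-, h2, hch, rfl⟩ := h
  refine ⟨by simp, ?_, ?_, ?_⟩
  · simp only [mem_cons, forall_eq_or_imp] at h2 ⊢
    exact ⟨by omega, h2.2⟩
  · exact isChain_cons.mpr (isChain_cons.mp hch)
  · simp only [map_cons, flatten_cons, add_comm p.2 e, replicate_add, append_assoc]

theorem IsBlockDecomp.cons {β : Type*} {bs : List (β × ℕ)} {l : List β} (h : IsBlockDecomp bs l)
    {a : β} (ha : l.head? ≠ some a) {d : ℕ} (hd : 2 ≤ d) :
    IsBlockDecomp ((a, d) :: bs) (replicate d a ++ l) := by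
  obtain ⟨p, bs, rfl⟩ := exists_cons_of_ne_nil h.1
  have hp := h.head?_eq
  obtain ⟨-, h2, hch, rfl⟩ := h
  refine ⟨by simp, ?_, isChain_cons.mpr ⟨?_, hch⟩, by simp⟩
  · simp only [mem_cons, forall_eq_or_imp] at h2 ⊢
    exact ⟨hd, h2⟩
  · simp only [head?_cons, Option.mem_def, Option.some.injEq, forall_eq']
    exact fun hpa => ha (hp.trans (congrArg some hpa.symm))

theorem isLDString_iff {β : Type*} {l : List β} : IsLDString l ↔ l ≠ [] ∧ l.RunsAtLeastTwo := by
  constructor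
  · rintro ⟨bs, hbs⟩
    obtain ⟨p, bs', rfl⟩ := exists_cons_of_ne_nil hbs.1
    refine ⟨fun hl => by simpa [hl] using hbs.head?_eq, ?_⟩
    obtain ⟨-, h2, -, rfl⟩ := hbs
    refine RunsAtLeastTwo.flatten fun r hr => ?_
    obtain ⟨q, hq, rfl⟩ := mem_map.mp hr
    exact RunsAtLeastTwo.replicate q.1 (h2 q hq)
  · rintro ⟨hne, h⟩
    induction h with
    | nil => exact absurd rfl hne
    | @pair a l hl ih =>
      by_cases hl0 : l = []
      · subst hl0
        exact ⟨[(a, 2)], by simp, by simp, isChain_singleton _, by simp⟩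
      obtain ⟨bs, hbs⟩ := ih hl0
      obtain ⟨p, bs', rfl⟩ := exists_cons_of_ne_nil hbs.1
      by_cases hpa : p.1 = a
      · exact ⟨_, hpa ▸ hbs.replicate_append 2⟩
      · exact ⟨_, hbs.cons (by rw [hbs.head?_eq]; simpa using hpa) le_rfl⟩
    | @dup a l hl ih =>
      obtain ⟨bs, hbs⟩ := ih (cons_ne_nil a l)
      obtain ⟨p, bs', rfl⟩ := exists_cons_of_ne_nil hbs.1
      have hpa : p.1 = a := by simpa using hbs.head?_eq.symm
      exact ⟨_, hpa ▸ hbs.replicate_append 1⟩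

theorem VarInfo.exists_value_of_sublist_Lblock_one {β : Type*} [DecidableEq β] {m : ℕ}
    {j k : Fin m} (hvi : (VarInfo.one j k).clauses.Nodup) {f : Fin m → β}
    (hf : Function.Injective f) {s : List β} (hs : s <+ (VarInfo.one j k).Lblock.map f)
    (hR : s.RunsAtLeastTwo) :
    ∃ b, s.length ≤ 2 + 2 * (if (VarInfo.one j k).isTwo = true ∧ b = true then 1 else 0) ∧
      ∀ c, f c ∈ s → (VarInfo.one j k).satisfied c b := by
  -- by `not_interleaved`, `s` keeps letters of `x_i` or of `¬x_i` but not both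
  have hmem : ∀ x ∈ s, x ∈ (VarInfo.one j k).Lblock.map f := fun x hx => hs.subset hx
  have hjk : f j ≠ f k := hf.ne (by simpa [VarInfo.clauses] using hvi)
  simp only [VarInfo.Lblock, map_cons, map_nil, mem_cons, not_mem_nil, or_false] at hs hmem
  have hnot : f j ∈ s → f k ∉ s := fun hj hk => hR.not_interleaved (u := [f k, f j]) hs hj hk
    hjk (by simp [hjk.symm]) (by simp [hjk]) (by simp [hjk, hjk.symm])
  refine ⟨decide (f j ∈ s), ?_, fun c hc => ?_⟩ <;> by_cases hj : f j ∈ s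
  · simpa [VarInfo.isTwo, hjk, hjk.symm] using
      hs.length_le_length_filter (p := (· = f j)) fun x hx => by grind
  · simpa [VarInfo.isTwo, hjk, hjk.symm] using
      hs.length_le_length_filter (p := (· = f k)) fun x hx => by grind
  · rcases hmem _ hc with h | h | h | h <;> obtain rfl := hf h <;> simp_all [VarInfo.satisfied]
  · rcases hmem _ hc with h | h | h | h <;> obtain rfl := hf h <;> simp_all [VarInfo.satisfied]

theorem VarInfo.exists_value_of_sublist_Lblock_two {β : Type*} [DecidableEq β] {m : ℕ}
    {j k l : Fin m} (hvi : (VarInfo.two j k l).clauses.Nodup) {f : Fin m → β}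
    (hf : Function.Injective f) {s : List β} (hs : s <+ (VarInfo.two j k l).Lblock.map f)
    (hR : s.RunsAtLeastTwo) :
    ∃ b, s.length ≤ 2 + 2 * (if (VarInfo.two j k l).isTwo = true ∧ b = true then 1 else 0) ∧
      ∀ c, f c ∈ s → (VarInfo.two j k l).satisfied c b := by
  have hmem : ∀ x ∈ s, x ∈ (VarInfo.two j k l).Lblock.map f := fun x hx => hs.subset hx
  have hdis : f j ≠ f k ∧ f j ≠ f l ∧ f k ≠ f l := by
    simp only [VarInfo.clauses, nodup_cons, mem_cons, not_mem_nil, or_false] at hvi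
    exact ⟨hf.ne (by tauto), hf.ne (by tauto), hf.ne (by tauto)⟩
  obtain ⟨hjk, hjl, hkl⟩ := hdis
  simp only [VarInfo.Lblock, map_cons, map_nil, mem_cons, not_mem_nil, or_false] at hs hmem
  have hnotj : f l ∈ s → f j ∉ s := fun hl hj => hR.not_interleaved (u := [f j, f l]) hs hj hl
    hjl (by simp [hjk.symm, hjl.symm, hkl.symm]) (by simp [hjl, hkl, hkl.symm])
    (by simp [hjl, hkl, hjk.symm, hjl.symm])
  have hnotk : f l ∈ s → f k ∉ s := fun hl hk => hR.not_interleaved (u := [f l, f k]) hs hl hk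
    hkl.symm (by simp [hjl, hkl, hkl.symm]) (by simp [hjk, hkl, hkl.symm])
    (by simp [hjk, hjl, hkl, hkl.symm])
  refine ⟨decide (f l ∉ s), ?_, fun c hc => ?_⟩ <;> by_cases hl : f l ∈ s
  · simpa [VarInfo.isTwo, hl, hjk, hjl, hkl, hjk.symm, hjl.symm, hkl.symm] using
      hs.length_le_length_filter (p := (· = f l)) fun x hx => by grind
  · simpa [VarInfo.isTwo, hl, hjk, hjl, hkl, hjk.symm, hjl.symm, hkl.symm] using
      hs.length_le_length_filter (p := (· ≠ f l)) fun x hx => by grind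
  · rcases hmem _ hc with h | h | h | h | h | h <;> obtain rfl := hf h <;>
      simp_all [VarInfo.satisfied]
  · rcases hmem _ hc with h | h | h | h | h | h <;> obtain rfl := hf h <;>
      simp_all [VarInfo.satisfied]

theorem VarInfo.exists_value_of_sublist_Lblock {β : Type*} [DecidableEq β] {m : ℕ}
    {vi : VarInfo m} (hvi : vi.clauses.Nodup) {f : Fin m → β} (hf : Function.Injective f)
    {s : List β} (hs : s <+ vi.Lblock.map f) (hR : s.RunsAtLeastTwo) :
    ∃ b, s.length ≤ 2 + 2 * (if vi.isTwo = true ∧ b = true then 1 else 0) ∧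
      ∀ c, f c ∈ s → vi.satisfied c b := by
  cases vi with
  | one j k => exact exists_value_of_sublist_Lblock_one hvi hf hs hR
  | two j k l => exact exists_value_of_sublist_Lblock_two hvi hf hs hR

theorem VarInfo.exists_sublist_Lblock {β : Type*} {m : ℕ} (vi : VarInfo m) (b : Bool)
    (f : Fin m → β) :
    ∃ s, s <+ vi.Lblock.map f ∧ s.RunsAtLeastTwo ∧
      2 + 2 * (if vi.isTwo = true ∧ b = true then 1 else 0) ≤ s.length ∧
      ∀ c, vi.satisfied c b → f c ∈ s := by
  cases vi with
  | one j k =>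
    cases b
    · exact ⟨[f k, f k], by simp [VarInfo.Lblock], .pair _ .nil, by simp [VarInfo.isTwo],
        by simp [VarInfo.satisfied]⟩
    · exact ⟨[f j, f j], by simp [VarInfo.Lblock], .pair _ .nil, by simp [VarInfo.isTwo],
        by simp [VarInfo.satisfied]⟩
  | two j k l =>
    cases b
    · exact ⟨[f l, f l], by simp [VarInfo.Lblock], .pair _ .nil, by simp [VarInfo.isTwo],
        by simp [VarInfo.satisfied]⟩
    · refine ⟨[f j, f j, f k, f k], by simp [VarInfo.Lblock], .pair _ (.pair _ .nil),
        by simp [VarInfo.isTwo], ?_⟩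
      simp only [VarInfo.satisfied]
      rintro c (⟨rfl | rfl, -⟩ | ⟨-, ⟨⟩⟩) <;> simp

def satGadget (m n : ℕ) (v : Fin n → VarInfo m) : Fin (n + 1) → List (Fin m ⊕ Fin (n + 1)) :=
  Fin.lastCases [] fun i => (v i).Lblock.map Sum.inl

@[simp]
theorem satGadget_castSucc (m n : ℕ) (v : Fin n → VarInfo m) (i : Fin n) :
    satGadget m n v i.castSucc = (v i).Lblock.map Sum.inl :=
  Fin.lastCases_castSucc i

@[simp]
theorem satGadget_last (m n : ℕ) (v : Fin n → VarInfo m) : satGadget m n v (Fin.last n) = [] :=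
  Fin.lastCases_last

theorem satString_eq_sepConcat (m n : ℕ) (v : Fin n → VarInfo m) :
    satString m n v = sepConcat Sum.inr (satGadget m n v) := by
  rw [sepConcat, ofFn_succ']
  simp [satString, ofFn_eq_map]

theorem length_sepConcat_of_last_eq_nil {β : Type*} {n : ℕ} (g : Fin (n + 1) → β)
    {L : Fin (n + 1) → List β} (hL : L (Fin.last n) = []) :
    (sepConcat g L).length = ∑ i : Fin n, ((L i.castSucc).length + 2) + 2 := by
  rw [length_sepConcat, Fin.sum_univ_castSucc, hL, length_nil, zero_add]

theorem sum_two_add_two_mul_ite {m n : ℕ} (v : Fin n → VarInfo m) (τ : Fin n → Bool) :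
    ∑ i, (2 + 2 * (if (v i).isTwo = true ∧ τ i = true then 1 else 0) + 2) =
      4 * n + 2 * (Finset.univ.filter fun i => (v i).isTwo = true ∧ τ i = true).card := by
  rw [Finset.sum_add_distrib, Finset.sum_add_distrib, ← Finset.mul_sum, ← Finset.card_filter]
  simp
  ring

theorem exists_satAssignment_of_isLDSubseq {m n : ℕ} {v : Fin n → VarInfo m}
    (hnodup : ∀ i, (v i).clauses.Nodup) {l : List (Fin m ⊕ Fin (n + 1))}
    (hl : IsLDSubseq l (satString m n v)) (hfull : ∀ a, a ∈ l) :
    ∃ τ, SatAssignment m n v τ ∧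
      l.length ≤
        4 * n + 2 + 2 * (Finset.univ.filter fun i => (v i).isTwo = true ∧ τ i = true).card := by
  obtain ⟨hsub, hLD⟩ := hl
  rw [satString_eq_sepConcat] at hsub
  have hsep : ∀ i j, Sum.inr i ∉ satGadget m n v j := fun i j => by
    induction j using Fin.lastCases <;> simp
  obtain ⟨s, σ, rfl, hs, -, hσ⟩ := (isLDString_iff.mp hLD).2.exists_eq_append_sepConcat
    Sum.inr_injective hsep (A := []) (by simp) (by simpa using hsub) (fun i => hfull _)
  obtain rfl := sublist_nil.mp hs
  have hlast : σ (Fin.last n) = [] := sublist_nil.mp (by simpa using (hσ (Fin.last n)).1)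
  choose τ hτlen hτsat using fun i : Fin n => (v i).exists_value_of_sublist_Lblock (hnodup i)
    Sum.inl_injective (by simpa using (hσ i.castSucc).1) (hσ i.castSucc).2
  refine ⟨τ, fun c => ?_, ?_⟩
  · obtain ⟨i, hi⟩ := mem_sepConcat.mp (hfull (Sum.inl c))
    induction i using Fin.lastCases with
    | last => simp [hlast] at hi
    | cast i => exact ⟨i, hτsat i c (by simpa using hi)⟩
  · calc ([] ++ sepConcat Sum.inr σ).length
        = ∑ i : Fin n, ((σ i.castSucc).length + 2) + 2 := length_sepConcat_of_last_eq_nil _ hlast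
      _ ≤ ∑ i : Fin n, (2 + 2 * (if (v i).isTwo = true ∧ τ i = true then 1 else 0) + 2) + 2 := by
        gcongr with i; exact hτlen i
      _ = _ := by rw [sum_two_add_two_mul_ite]; ring

theorem exists_isLDSubseq_of_satAssignment {m n : ℕ} (v : Fin n → VarInfo m) {τ : Fin n → Bool}
    (hτ : SatAssignment m n v τ) :
    ∃ l, IsLDSubseq l (satString m n v) ∧ (∀ a, a ∈ l) ∧
      4 * n + 2 + 2 * (Finset.univ.filter fun i => (v i).isTwo = true ∧ τ i = true).card ≤
        l.length := by
  choose σ hσsub hσR hσlen hσmem using fun i => (v i).exists_sublist_Lblock (τ i)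
    (Sum.inl : Fin m → Fin m ⊕ Fin (n + 1))
  refine ⟨sepConcat Sum.inr (Fin.lastCases [] σ), ⟨?_, ?_⟩, ?_, ?_⟩
  · rw [satString_eq_sepConcat]
    refine sepConcat_sublist_sepConcat _ fun i => ?_
    induction i using Fin.lastCases <;> simp [hσsub]
  · refine isLDString_iff.mpr ⟨by simp [sepConcat], RunsAtLeastTwo.sepConcat _ fun i => ?_⟩
    induction i using Fin.lastCases <;> simp [hσR, RunsAtLeastTwo.nil]
  · rintro (c | i)
    · obtain ⟨i, hi⟩ := hτ c
      exact mem_sepConcat.mpr ⟨i.castSucc, Or.inr (by simpa using hσmem i c hi)⟩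
    · exact mem_sepConcat.mpr ⟨i, Or.inl rfl⟩
  · rw [length_sepConcat_of_last_eq_nil _ Fin.lastCases_last]
    calc _ = ∑ i, (2 + 2 * (if (v i).isTwo = true ∧ τ i = true then 1 else 0) + 2) + 2 := by
          rw [sum_two_add_two_mul_ite]; ring
      _ ≤ _ := by gcongr with i; simpa using hσlen i

theorem stmt_10_general (m n : ℕ) (v : Fin n → VarInfo m)
    (hnodup : ∀ i : Fin n, (v i).clauses.Nodup)
    (K : ℕ) :
    (∃ l : List (Fin m ⊕ Fin (n + 1)), IsLDSubseq l (satString m n v) ∧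
        (∀ a : Fin m ⊕ Fin (n + 1), a ∈ l) ∧ 4 * n + 2 + 2 * K ≤ l.length) ↔
      ∃ τ : Fin n → Bool, SatAssignment m n v τ ∧
        K ≤ (Finset.univ.filter fun i : Fin n => (v i).isTwo = true ∧ τ i = true).card := by
  constructor
  · rintro ⟨l, hl, hfull, hlen⟩
    obtain ⟨τ, hτ, hle⟩ := exists_satAssignment_of_isLDSubseq hnodup hl hfull
    exact ⟨τ, hτ, by omega⟩
  · rintro ⟨τ, hτ, hK⟩
    obtain ⟨l, hl, hfull, hlen⟩ := exists_isLDSubseq_of_satAssignment v hτ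
    exact ⟨l, hl, hfull, by omega⟩

/-- The constructed string `S` has a full-appearance LD-subsequence of length at least
`4n + 2 + 2K` iff `φ` has a satisfying assignment with at least `K` of the
`(2,1)`-variables assigned `True`. -/
theorem stmt_10 (m n : ℕ) (v : Fin n → VarInfo m)
    (hnodup : ∀ i : Fin n, (v i).clauses.Nodup)
    (hclause : ∀ c : Fin m, 2 ≤ numLit m n v c ∧ numLit m n v c ≤ 3)
    (K : ℕ) :
    (∃ l : List (Fin m ⊕ Fin (n + 1)), IsLDSubseq l (satString m n v) ∧
        (∀ a : Fin m ⊕ Fin (n + 1), a ∈ l) ∧ 4 * n + 2 + 2 * K ≤ l.length) ↔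
      ∃ τ : Fin n → Bool, SatAssignment m n v τ ∧
        K ≤ (Finset.univ.filter fun i : Fin n => (v i).isTwo = true ∧ τ i = true).card :=
  stmt_10_general m n v hnodup K
end

section
/- Let S be a string over an alphabet Σ₀, let M ≥ 2, and let 1, 2, …, M be M new letters not in Σ₀. Define S* = 1·2·⋯·M·S·M·(M−1)·⋯·2·1 over the alphabet Σ₀ ∪ {1,…,M}. Then every LD-subsequence of S* that contains at least one of the letters 1, …, M has length at most 2. -/
/-!
Each new letter `x` occurs exactly twice in `S*`, once in each padding half. So an
LD-subsequence containing `x` is either a power of `x`, of length at most 2, or has a block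
`y y` next to the block of `x`, making `y y x x` or `x x y y` a subsequence of `S*`. Matching
`y y x x` forces both `y`s into the part of the first padding half before `x`, where `y` occurs
at most once; `x x y y` is the mirror image.
-/

namespace List

variable {α : Type*}

theorem sublist_of_append_pair_sublist_append_cons {l u v : List α} {x : α}
    (hu : x ∉ u) (hv : ¬[x, x] <+ v) (h : l ++ [x, x] <+ u ++ x :: v) : l <+ u := by
  induction u generalizing l with
  | nil =>
    cases l with
    | nil => exact Sublist.refl _
    | cons a l =>
      exact absurd ((sublist_append_right l _).trans h.tail) hv
  | cons a u ih =>
    rcases sublist_cons_iff.mp h with h | ⟨r, hlr, hr⟩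
    · exact (ih (fun hx => hu (mem_cons_of_mem a hx)) h).cons a
    · cases l with
      | nil =>
        obtain ⟨rfl, -⟩ := cons_eq_cons.mp hlr
        exact absurd mem_cons_self hu
      | cons b l =>
        obtain ⟨rfl, rfl⟩ := cons_eq_cons.mp hlr
        exact (ih (fun hx => hu (mem_cons_of_mem _ hx)) hr).cons_cons _

theorem count_append_append_reverse [DecidableEq α] {P S : List α} {x : α}
    (hP : P.Nodup) (hxP : x ∈ P) (hxS : x ∉ S) : (P ++ S ++ P.reverse).count x = 2 := by
  simp [count_eq_one_of_mem hP hxP, count_eq_zero_of_not_mem hxS]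

theorem not_pair_pair_sublist_append_append_reverse {P S : List α} {x y : α}
    (hP : P.Nodup) (hxP : x ∈ P) (hxS : x ∉ S) : ¬[y, y, x, x] <+ P ++ S ++ P.reverse := by
  classical
  intro h
  obtain ⟨P₁, P₂, hP₁₂⟩ := append_of_mem hxP
  set v := P₂ ++ S ++ P.reverse
  have hT : P ++ S ++ P.reverse = P₁ ++ x :: v := by
    calc P ++ S ++ P.reverse = P₁ ++ x :: P₂ ++ S ++ P.reverse := by rw [← hP₁₂]
      _ = P₁ ++ x :: v := by simp [v]
  have hcountP : P.count x = 1 := count_eq_one_of_mem hP hxP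
  have hxP₁ : x ∉ P₁ := by
    rw [hP₁₂] at hcountP
    simp only [count_append, count_cons_self] at hcountP
    exact not_mem_of_count_eq_zero (by omega)
  have hv : ¬[x, x] <+ v := by
    have hcountT := count_append_append_reverse hP hxP hxS
    rw [hT] at hcountT
    simp only [count_append, count_cons_self] at hcountT
    rw [show [x, x] = replicate 2 x from rfl, replicate_sublist_iff]
    omega
  rw [hT, ← singleton_append] at h
  have hyy : [y, y] <+ P₁ := sublist_of_append_pair_sublist_append_cons hxP₁ hv h
  exact nodup_iff_sublist.mp hP y (hyy.trans (hP₁₂ ▸ sublist_append_left _ _))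

theorem not_pair_pair_sublist_append_append_reverse' {P S : List α} {x y : α}
    (hP : P.Nodup) (hxP : x ∈ P) (hxS : x ∉ S) : ¬[x, x, y, y] <+ P ++ S ++ P.reverse := by
  intro h
  have h' : [y, y, x, x] <+ P ++ S.reverse ++ P.reverse := by
    simpa [append_assoc] using h.reverse
  exact not_pair_pair_sublist_append_append_reverse hP hxP (by simpa using hxS) h'

end List

open List

theorem IsBlockDecomp.forall_mem_eq_or_exists_sublist {α : Type*} {bs : List (α × ℕ)}
    {l : List α} (h : IsBlockDecomp bs l) {x : α} (hx : x ∈ l) :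
    (∀ z ∈ l, z = x) ∨ ∃ y, y ≠ x ∧ ([y, y, x, x] <+ l ∨ [x, x, y, y] <+ l) := by
  obtain ⟨-, hexp, hchain, rfl⟩ := h
  induction bs with
  | nil => simp at hx
  | cons b bs ih =>
    rcases bs with _ | ⟨c, bs⟩
    · left
      simp_all
    · have hb : [b.1, b.1] <+ replicate b.2 b.1 :=
        (replicate_sublist_replicate b.1).mpr (hexp b mem_cons_self)
      have hc : [c.1, c.1] <+ replicate c.2 c.1 :=
        (replicate_sublist_replicate c.1).mpr (hexp c (by simp))
      simp only [map_cons, flatten_cons] at hx ih ⊢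
      by_cases hxb : x = b.1
      · subst hxb
        exact Or.inr ⟨c.1, hchain.rel.symm,
          Or.inr (hb.append (hc.trans (sublist_append_left _ _)))⟩
      · have hcl := hc.trans (sublist_append_left _ ((bs.map fun p => replicate p.2 p.1).flatten))
        rcases ih (fun p hp => hexp p (mem_cons_of_mem b hp)) hchain.tail (by simpa [hxb] using hx)
          with hl | ⟨y, hy, hyx | hxy⟩
        · have hcx : c.1 = x := hl c.1 (hcl.subset mem_cons_self)
          exact Or.inr ⟨b.1, Ne.symm hxb, Or.inl (hb.append (hcx ▸ hcl))⟩
        · exact Or.inr ⟨y, hy, Or.inl (hyx.trans (sublist_append_right _ _))⟩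
        · exact Or.inr ⟨y, hy, Or.inr (hxy.trans (sublist_append_right _ _))⟩

theorem stmt_12_general {α : Type*} (S : List α) (M : ℕ)
    (p : Fin M → α) (hinj : Function.Injective p) (hnew : ∀ i : Fin M, p i ∉ S) :
    ∀ l : List α, IsLDSubseq l (List.ofFn p ++ S ++ (List.ofFn p).reverse) →
      (∃ i : Fin M, p i ∈ l) → l.length ≤ 2 := by
  classical
  rintro l ⟨hsub, bs, hbs⟩ ⟨i, hil⟩
  have hP : (ofFn p).Nodup := nodup_ofFn.mpr hinj
  have hxP : p i ∈ ofFn p := mem_ofFn.mpr ⟨i, rfl⟩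
  rcases hbs.forall_mem_eq_or_exists_sublist hil with hl | ⟨y, -, hyx | hxy⟩
  · calc l.length = l.count (p i) := (count_eq_length.mpr fun z hz => (hl z hz).symm).symm
      _ ≤ (ofFn p ++ S ++ (ofFn p).reverse).count (p i) := hsub.count_le _
      _ = 2 := count_append_append_reverse hP hxP (hnew i)
  · exact (not_pair_pair_sublist_append_append_reverse hP hxP (hnew i) (hyx.trans hsub)).elim
  · exact (not_pair_pair_sublist_append_append_reverse' hP hxP (hnew i) (hxy.trans hsub)).elim

/-- Padding construction: if `p 0, …, p (M−1)` are `M ≥ 2` distinct new letters not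
occurring in `S`, and `S* = p 0 ⋯ p (M−1) · S · p (M−1) ⋯ p 0`, then every
LD-subsequence of `S*` containing at least one of the new letters has length at most 2. -/
theorem stmt_12 {α : Type*} (S : List α) (M : ℕ) (hM : 2 ≤ M)
    (p : Fin M → α) (hinj : Function.Injective p) (hnew : ∀ i : Fin M, p i ∉ S) :
    ∀ l : List α, IsLDSubseq l (List.ofFn p ++ S ++ (List.ofFn p).reverse) →
      (∃ i : Fin M, p i ∈ l) → l.length ≤ 2 :=
  stmt_12_general S M p hinj hnew
end

section
/- Let S be a string of length n over a finite alphabet Σ, indexed S[1..n]. Define L : {0,1,…,n} → ℕ by L(0) = 0, L(1) = 0, and for i ≥ 2: if there is no x ∈ (0, i−1] with S[i−x] = S[i] then L(i) = L(i−1); otherwise, with x = min{x | S[i−x] = S[i], 0 < x ≤ i−1}, L(i) = max{ L(i−x−1) + 2, L(i−x) + 1, L(i−1) }. Then L(n) equals the maximum length of an LD-subsequence of S (and 0 if S has no LD-subsequence). -/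
/-!
Write `M(S)` for the largest length of an LD-subsequence of `S` (or `0`). An LD-subsequence of
`S ++ [c]` that uses the final `c` ends in a block `c^d` with `d ≥ 2`, so `c` occurs in `S`;
hence `M(S ++ [c]) = M(S)` when it does not. Otherwise split at the last earlier occurrence,
`A ++ [c] ++ Q ++ [c]` with `c ∉ Q`. Everything before the final `c` then lies in `A ++ [c]`:
for `d ≥ 3` dropping the final `c` leaves an LD-subsequence of `A ++ [c]`, and for `d = 2`
dropping `c c` leaves an LD-subsequence of `A` or the empty string. Each of these can be extended
back, so `M(A ++ [c] ++ Q ++ [c]) = max (M(A) + 2) (max (M(A ++ [c]) + 1) (M(A ++ [c] ++ Q)))`,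
which is the recurrence for `L` with `A = S[1..i-x-1]`.
-/

open scoped List

section

variable {α : Type*}

namespace IsLDString

theorem replicate {d : ℕ} (hd : 2 ≤ d) (a : α) : IsLDString (List.replicate d a) :=
  ⟨[(a, d)], by simp, by simpa using hd, List.isChain_singleton _, by simp⟩

theorem exists_eq_append_replicate {l : List α} (h : IsLDString l) :
    ∃ (l' : List α) (a : α) (d : ℕ), 2 ≤ d ∧ l = l' ++ List.replicate d a ∧
      (l' = [] ∨ IsLDString l') ∧ ∀ e, 2 ≤ e → IsLDString (l' ++ List.replicate e a) := by
  obtain ⟨bs, hne, hd, hch, rfl⟩ := h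
  obtain ⟨bs', ⟨a, d⟩, rfl⟩ := bs.eq_nil_or_concat.resolve_left hne
  simp only [List.concat_eq_append, List.mem_append, List.mem_singleton] at hd hch
  have hch' : List.IsChain (fun p q => p.1 ≠ q.1) bs' := (List.isChain_append.1 hch).1
  refine ⟨(bs'.map fun p => List.replicate p.2 p.1).flatten, a, d, hd _ (Or.inr rfl),
    by simp, ?_, fun e he => ⟨bs' ++ [(a, e)], by simp, ?_, ?_, by simp⟩⟩
  · rcases eq_or_ne bs' [] with rfl | hne'
    · simp
    · exact Or.inr ⟨bs', hne', fun p hp => hd p (Or.inl hp), hch', rfl⟩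
  · simp only [List.mem_append, List.mem_singleton]
    rintro p (hp | rfl)
    exacts [hd p (Or.inl hp), he]
  · rw [List.Chain', List.isChain_append] at hch ⊢
    simpa using hch

theorem two_le_length {l : List α} (h : IsLDString l) : 2 ≤ l.length := by
  obtain ⟨l', a, d, hd, rfl, -⟩ := h.exists_eq_append_replicate
  simp only [List.length_append, List.length_replicate]
  omega

theorem append_replicate_of_getLast?_ne {l : List α} {a : α} {d : ℕ} (h : IsLDString l)
    (hl : l.getLast? ≠ some a) (hd : 2 ≤ d) : IsLDString (l ++ List.replicate d a) := by
  obtain ⟨bs, hne, hbs, hch, rfl⟩ := h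
  obtain ⟨bs', p, rfl⟩ := bs.eq_nil_or_concat.resolve_left hne
  have hp : p.1 ≠ a := by
    have := hbs p (by simp)
    rintro rfl
    exact hl (by simp [List.getLast?_replicate]; omega)
  refine ⟨bs'.concat p ++ [(a, d)], by simp, ?_, ?_, by simp⟩
  · simp only [List.mem_append, List.mem_singleton]
    rintro q (hq | rfl)
    exacts [hbs q hq, hd]
  · rw [List.Chain', List.isChain_append]
    exact ⟨hch, List.isChain_singleton _, by simpa using hp⟩

theorem append_singleton_of_getLast? {l : List α} {a : α} (h : IsLDString l)
    (hl : l.getLast? = some a) : IsLDString (l ++ [a]) := by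
  obtain ⟨l', b, d, hd, rfl, -, he⟩ := h.exists_eq_append_replicate
  obtain rfl : b = a := by simpa [List.getLast?_replicate, show d ≠ 0 by omega] using hl
  simpa [List.replicate_succ'] using he (d + 1) (by omega)

theorem append_pair {l : List α} (h : l = [] ∨ IsLDString l) (a : α) :
    IsLDString (l ++ [a, a]) := by
  rcases h with rfl | h
  · exact replicate le_rfl a
  by_cases hl : l.getLast? = some a
  · simpa using (h.append_singleton_of_getLast? hl).append_singleton_of_getLast? (by simp)
  · exact h.append_replicate_of_getLast?_ne hl le_rfl

theorem of_append_singleton {l : List α} {c : α} (h : IsLDString (l ++ [c])) :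
    l.getLast? = some c ∧ (IsLDString l ∨ ∃ l', l = l' ++ [c] ∧ (l' = [] ∨ IsLDString l')) := by
  obtain ⟨l', a, d, hd, heq, hl', he⟩ := h.exists_eq_append_replicate
  obtain ⟨e, rfl⟩ : ∃ e, d = e + 1 := ⟨d - 1, by omega⟩
  rw [List.replicate_succ', ← List.append_assoc] at heq
  obtain ⟨rfl, hc⟩ := List.append_inj' heq rfl
  obtain rfl : c = a := by simpa using hc
  refine ⟨by simp [List.getLast?_replicate, show e ≠ 0 by omega], ?_⟩
  rcases Nat.lt_or_ge e 2 with he2 | he2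
  · exact Or.inr ⟨l', by rw [show e = 1 by omega]; rfl, hl'⟩
  · exact Or.inl (he e he2)

end IsLDString

namespace List

theorem sublist_append_singleton_iff {l S : List α} {c : α} :
    l <+ S ++ [c] ↔ l <+ S ∨ ∃ l₁, l = l₁ ++ [c] ∧ l₁ <+ S := by
  refine ⟨fun h => ?_, ?_⟩
  · obtain ⟨l₁, l₂, rfl, h₁, h₂⟩ := sublist_append_iff.1 h
    rcases sublist_singleton.1 h₂ with rfl | rfl
    · exact Or.inl (by simpa using h₁)
    · exact Or.inr ⟨l₁, rfl, h₁⟩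
  · rintro (h | ⟨l₁, rfl, h⟩)
    exacts [h.trans (sublist_append_left S [c]), h.append_right [c]]

theorem Sublist.of_append_singleton {l S : List α} {a b : α} (h : l ++ [a] <+ S ++ [b]) :
    l <+ S :=
  reverse_sublist.1 (by simpa using h.reverse : a :: l.reverse <+ b :: S.reverse).of_cons_cons

theorem Sublist.left_of_getLast?_notMem {l A Q : List α} {c : α} (h : l <+ A ++ Q)
    (hl : l.getLast? = some c) (hc : c ∉ Q) : l <+ A := by
  obtain ⟨l₁, l₂, rfl, h₁, h₂⟩ := sublist_append_iff.1 h
  rcases eq_or_ne l₂ [] with rfl | hne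
  · simpa using h₁
  · rw [getLast?_append_of_ne_nil l₁ hne] at hl
    exact absurd (h₂.subset (mem_of_getLast? hl)) hc

end List

def ldLengths (S : List α) : Set ℕ :=
  {0} ∪ {k | ∃ l, IsLDSubseq l S ∧ l.length = k}

theorem mem_ldLengths {S : List α} {k : ℕ} :
    k ∈ ldLengths S ↔ ∃ l, l <+ S ∧ (l = [] ∨ IsLDString l) ∧ l.length = k := by
  constructor
  · rintro (rfl | ⟨l, ⟨hS, hl⟩, rfl⟩)
    exacts [⟨[], List.nil_sublist S, Or.inl rfl, rfl⟩, ⟨l, hS, Or.inr hl, rfl⟩]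
  · rintro ⟨l, hS, rfl | hl, rfl⟩
    exacts [Or.inl rfl, Or.inr ⟨l, ⟨hS, hl⟩, rfl⟩]

theorem length_mem_ldLengths {l S : List α} (hS : l <+ S) (hl : l = [] ∨ IsLDString l) :
    l.length ∈ ldLengths S :=
  mem_ldLengths.2 ⟨l, hS, hl, rfl⟩

theorem ldLengths_mono {S T : List α} (h : S <+ T) : ldLengths S ⊆ ldLengths T := by
  intro k hk
  obtain ⟨l, hS, hl, rfl⟩ := mem_ldLengths.1 hk
  exact length_mem_ldLengths (hS.trans h) hl

theorem isGreatest_ldLengths_of_length_lt_two {S : List α} (hS : S.length < 2) :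
    IsGreatest (ldLengths S) 0 := by
  refine ⟨Or.inl rfl, fun k hk => ?_⟩
  obtain ⟨l, hlS, rfl | hl, rfl⟩ := mem_ldLengths.1 hk
  · exact le_rfl
  · exact absurd (hl.two_le_length.trans hlS.length_le) (by omega)

theorem IsGreatest.ldLengths_append_of_notMem {S : List α} {c : α} {m : ℕ}
    (hm : IsGreatest (ldLengths S) m) (hc : c ∉ S) : IsGreatest (ldLengths (S ++ [c])) m := by
  refine ⟨ldLengths_mono (List.sublist_append_left S [c]) hm.1, fun k hk => ?_⟩
  obtain ⟨l, hlS, hl, rfl⟩ := mem_ldLengths.1 hk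
  rcases List.sublist_append_singleton_iff.1 hlS with hlS | ⟨l₁, rfl, hl₁⟩
  · exact hm.2 (length_mem_ldLengths hlS hl)
  · have hlast := (hl.resolve_left (by simp)).of_append_singleton.1
    exact absurd (hl₁.subset (List.mem_of_getLast? hlast)) hc

section LastOccurrence

variable {A Q : List α} {c : α} {a b m : ℕ}

theorem ldLengths_append_last_occurrence_le (hQ : c ∉ Q)
    (ha : a ∈ upperBounds (ldLengths A)) (hb : b ∈ upperBounds (ldLengths (A ++ [c])))
    (hm : m ∈ upperBounds (ldLengths (A ++ [c] ++ Q))) :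
    max (a + 2) (max (b + 1) m) ∈ upperBounds (ldLengths (A ++ [c] ++ Q ++ [c])) := by
  intro k hk
  obtain ⟨l, hlS, hl, rfl⟩ := mem_ldLengths.1 hk
  rcases List.sublist_append_singleton_iff.1 hlS with hlS | ⟨l₁, rfl, hl₁⟩
  · exact le_max_of_le_right (le_max_of_le_right (hm (length_mem_ldLengths hlS hl)))
  obtain ⟨hlast, hcases⟩ := (hl.resolve_left (by simp)).of_append_singleton
  have hl₁A : l₁ <+ A ++ [c] := hl₁.left_of_getLast?_notMem hlast hQ
  rcases hcases with hl₁' | ⟨l', rfl, hl'⟩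
  · have := hb (length_mem_ldLengths hl₁A (Or.inr hl₁'))
    simp only [List.length_append, List.length_singleton]
    omega
  · have := ha (length_mem_ldLengths hl₁A.of_append_singleton hl')
    simp only [List.length_append, List.length_singleton]
    omega

theorem ldLengths_append_last_occurrence_mem (ha : IsGreatest (ldLengths A) a)
    (hb : b ∈ ldLengths (A ++ [c])) (hm : m ∈ ldLengths (A ++ [c] ++ Q)) :
    max (a + 2) (max (b + 1) m) ∈ ldLengths (A ++ [c] ++ Q ++ [c]) := by
  have hAc : A ++ [c] <+ A ++ [c] ++ Q := List.sublist_append_left _ Q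
  have hpair : a + 2 ∈ ldLengths (A ++ [c] ++ Q ++ [c]) := by
    obtain ⟨l, hlA, hl, rfl⟩ := mem_ldLengths.1 ha.1
    refine mem_ldLengths.2 ⟨l ++ [c, c], ?_, Or.inr (IsLDString.append_pair hl c), by simp⟩
    simpa using (hlA.append_right [c]).trans hAc |>.append_right [c]
  have hextend : a + 1 < b → b + 1 ∈ ldLengths (A ++ [c] ++ Q ++ [c]) := by
    intro hab
    obtain ⟨l, hlAc, hl, rfl⟩ := mem_ldLengths.1 hb
    have hl : IsLDString l := hl.resolve_left (by rintro rfl; simp at hab)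
    -- `l` is longer than any LD-subsequence of `A`, so it uses the `c` after `A`
    rcases List.sublist_append_singleton_iff.1 hlAc with hlA | ⟨l₁, rfl, hl₁⟩
    · exact absurd (ha.2 (length_mem_ldLengths hlA (Or.inr hl))) (by omega)
    refine mem_ldLengths.2 ⟨l₁ ++ [c] ++ [c], ?_, Or.inr (hl.append_singleton_of_getLast? ?_),
      by simp⟩
    · exact ((hl₁.append_right [c]).trans hAc).append_right [c]
    · simp
  have hskip : m ∈ ldLengths (A ++ [c] ++ Q ++ [c]) :=
    ldLengths_mono (List.sublist_append_left _ [c]) hm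
  rcases (by omega : max (a + 2) (max (b + 1) m) = a + 2 ∨ max (a + 2) (max (b + 1) m) = m ∨
      (max (a + 2) (max (b + 1) m) = b + 1 ∧ a + 1 < b)) with h | h | ⟨h, hab⟩ <;> rw [h]
  exacts [hpair, hskip, hextend hab]

theorem isGreatest_ldLengths_append_last_occurrence (hQ : c ∉ Q)
    (ha : IsGreatest (ldLengths A) a) (hb : IsGreatest (ldLengths (A ++ [c])) b)
    (hm : IsGreatest (ldLengths (A ++ [c] ++ Q)) m) :
    IsGreatest (ldLengths (A ++ [c] ++ Q ++ [c])) (max (a + 2) (max (b + 1) m)) :=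
  ⟨ldLengths_append_last_occurrence_mem ha hb.1 hm.1,
    ldLengths_append_last_occurrence_le hQ ha.2 hb.2 hm.2⟩

end LastOccurrence

def stringPrefix (s : ℕ → α) (i : ℕ) : List α :=
  (List.range i).map fun t => s (t + 1)

section StringPrefix

variable (s : ℕ → α)

theorem stringPrefix_succ (i : ℕ) : stringPrefix s (i + 1) = stringPrefix s i ++ [s (i + 1)] := by
  simp [stringPrefix, List.range_succ]

theorem stringPrefix_add (i k : ℕ) :
    stringPrefix s (i + k) = stringPrefix s i ++ (List.range k).map fun t => s (i + t + 1) := by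
  simp [stringPrefix, List.range_add, Function.comp_def]

variable {s}

theorem isGreatest_ldLengths_stringPrefix_of_forall_ne {i m : ℕ} (hi : 1 ≤ i)
    (hne : ∀ x, 0 < x → x ≤ i - 1 → s (i - x) ≠ s i)
    (hm : IsGreatest (ldLengths (stringPrefix s (i - 1))) m) :
    IsGreatest (ldLengths (stringPrefix s i)) m := by
  obtain ⟨k, rfl⟩ : ∃ k, i = k + 1 := ⟨i - 1, by omega⟩
  rw [stringPrefix_succ]
  refine hm.ldLengths_append_of_notMem ?_
  simp only [stringPrefix, List.mem_map, List.mem_range, not_exists, not_and]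
  intro t ht heq
  exact hne (k - t) (by omega) (by omega) (by rwa [show k + 1 - (k - t) = t + 1 by omega])

theorem isGreatest_ldLengths_stringPrefix_of_last_occurrence {i x a b m : ℕ} (hx0 : 0 < x)
    (hxi : x ≤ i - 1) (hsx : s (i - x) = s i)
    (hmin : ∀ x', 0 < x' → x' < x → s (i - x') ≠ s i)
    (ha : IsGreatest (ldLengths (stringPrefix s (i - x - 1))) a)
    (hb : IsGreatest (ldLengths (stringPrefix s (i - x))) b)
    (hm : IsGreatest (ldLengths (stringPrefix s (i - 1))) m) :
    IsGreatest (ldLengths (stringPrefix s i)) (max (a + 2) (max (b + 1) m)) := by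
  obtain ⟨j, q, rfl, rfl⟩ : ∃ j q, i = j + 1 + q + 1 ∧ x = q + 1 :=
    ⟨i - x - 1, x - 1, by omega, by omega⟩
  rw [show j + 1 + q + 1 - (q + 1) = j + 1 by omega] at hb hsx
  rw [show j + 1 + q + 1 - (q + 1) - 1 = j by omega] at ha
  rw [Nat.add_sub_cancel, stringPrefix_add, stringPrefix_succ] at hm
  rw [stringPrefix_succ] at hb
  rw [stringPrefix_succ, stringPrefix_add, stringPrefix_succ, hsx]
  rw [hsx] at hb hm
  refine isGreatest_ldLengths_append_last_occurrence ?_ ha hb hm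
  simp only [List.mem_map, List.mem_range, not_exists, not_and]
  intro t ht heq
  exact hmin (q - t) (by omega) (by omega)
    (by rwa [show j + 1 + q + 1 - (q - t) = j + 1 + t + 1 by omega])

end StringPrefix

end

/-- Correctness of the linear-time DP for LLDS. The string is `S[1..n]` with `S[i] = s i`;
`L` satisfies the recurrence `L(0) = L(1) = 0`; for `2 ≤ i ≤ n`, if no `x ∈ (0, i−1]` has
`S[i−x] = S[i]` then `L(i) = L(i−1)`, and otherwise, for the minimal such `x`,
`L(i) = max (L(i−x−1) + 2) (max (L(i−x) + 1) (L(i−1)))`. Then `L(n)` is the maximum length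
of an LD-subsequence of `S` (and `0` if `S` has no LD-subsequence). -/
theorem stmt_13 {α : Type*} (n : ℕ) (s : ℕ → α) (L : ℕ → ℕ)
    (hL0 : L 0 = 0) (hL1 : 1 ≤ n → L 1 = 0)
    (hrecNone : ∀ i : ℕ, 2 ≤ i → i ≤ n →
      (∀ x : ℕ, 0 < x → x ≤ i - 1 → s (i - x) ≠ s i) → L i = L (i - 1))
    (hrecMin : ∀ i : ℕ, 2 ≤ i → i ≤ n → ∀ x : ℕ, 0 < x → x ≤ i - 1 → s (i - x) = s i →
      (∀ x' : ℕ, 0 < x' → x' < x → s (i - x') ≠ s i) →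
      L i = max (L (i - x - 1) + 2) (max (L (i - x) + 1) (L (i - 1)))) :
    IsGreatest
      ({0} ∪ {k : ℕ | ∃ l : List α,
        IsLDSubseq l ((List.range n).map fun t => s (t + 1)) ∧ l.length = k})
      (L n) := by
  suffices h : ∀ i ≤ n, IsGreatest (ldLengths (stringPrefix s i)) (L i) from h n le_rfl
  intro i
  induction i using Nat.strong_induction_on with
  | _ i IH =>
  intro hin
  rcases Nat.lt_or_ge i 2 with hi | hi
  · have hLi : L i = 0 := by
      obtain rfl | rfl : i = 0 ∨ i = 1 := by omega
      exacts [hL0, hL1 hin]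
    rw [hLi]
    exact isGreatest_ldLengths_of_length_lt_two (by simpa [stringPrefix] using hi)
  by_cases hex : ∃ x, 0 < x ∧ x ≤ i - 1 ∧ s (i - x) = s i
  · classical
    obtain ⟨hx0, hxi, hsx⟩ := Nat.find_spec hex
    have hmin : ∀ x', 0 < x' → x' < Nat.find hex → s (i - x') ≠ s i :=
      fun x' hx' hlt heq => Nat.find_min hex hlt ⟨hx', by omega, heq⟩
    rw [hrecMin i hi hin _ hx0 hxi hsx hmin]
    exact isGreatest_ldLengths_stringPrefix_of_last_occurrence hx0 hxi hsx hmin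
      (IH _ (by omega) (by omega)) (IH _ (by omega) (by omega)) (IH _ (by omega) (by omega))
  · have hne : ∀ x, 0 < x → x ≤ i - 1 → s (i - x) ≠ s i :=
      fun x hx0 hxi hsx => hex ⟨x, hx0, hxi, hsx⟩
    rw [hrecNone i hi hin hne]
    exact isGreatest_ldLengths_stringPrefix_of_forall_ne (by omega) hne
      (IH _ (by omega) (by omega))
end

section
/- Let S be a string of length n over a finite alphabet Σ, indexed S[1..n], and for each x ∈ Σ and each ℓ ≥ 2 let w_x(ℓ) > 0 be a given weight (arbitrary positive, not necessarily monotone in ℓ). For 1 ≤ i ≤ j ≤ n, let N(i,j) be the number of occurrences of the letter S[j] in S[i..j], and define w[i,j] = max{ w_{S[j]}(ℓ) : 2 ≤ ℓ ≤ N(i,j) } if N(i,j) ≥ 2, and w[i,j] = 0 otherwise. Define T(0) = 0 and, for 1 ≤ i ≤ n, T(i) = max over all y with 0 ≤ y < i, (y = 0 or S[y] ≠ S[i]), and w[y+1, i] > 0, of T(y) + w[y+1, i] (and T(i) = 0 if no such y exists). Then max_{0 ≤ i ≤ n} T(i) equals the maximum total weight of an LD-subsequence of S, where the weight of an LD-subsequence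 x₁^{d₁} x₂^{d₂} ⋯ x_k^{d_k} is Σ_{i=1}^{k} w_{x_i}(d_i) (and the maximum is 0 if S has no LD-subsequence). -/
/-!
`T i` is the largest weight of an LD-subsequence of `S[1..i]` whose last block ends with the
letter `S[i]` at position `i` (or `0`). Every positive `T i` is realised by such a subsequence:
append the block `S[i]^ℓ` realising `W (y+1) i` to the one realising `T y`; the side condition
`S[y] ≠ S[i]` keeps adjacent blocks distinct. Conversely, induct on the blocks of an
LD-subsequence: if the earlier blocks weigh at most `T y`, with `S[y]` the previous letter, then
the last block `x^d` lies after position `y`, and the transition from `y` to the last occurrence `i`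
of `x` in that segment gives `T y + w x d ≤ T i`.
-/

theorem List.exists_sublist_take_and_sublist_drop {α : Type*} {l₁ l₂ L : List α}
    (h : (l₁ ++ l₂).Sublist L) :
    ∃ k ≤ L.length, l₁.Sublist (L.take k) ∧ l₂.Sublist (L.drop k) := by
  obtain ⟨r₁, r₂, rfl, h₁, h₂⟩ := List.append_sublist_iff.mp h
  exact ⟨r₁.length, by simp, by simpa using h₁, by simpa using h₂⟩

section BlockList

variable {α : Type*}

def blockString (bs : List (α × ℕ)) : List α :=
  (bs.map fun p => List.replicate p.2 p.1).flatten

def blockWeight (w : α → ℕ → ℝ) (bs : List (α × ℕ)) : ℝ :=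
  (bs.map fun p => w p.1 p.2).sum

/-- `IsBlockDecomp` without non-emptiness; unlike it, closed under taking prefixes. -/
def IsLDBlockList (bs : List (α × ℕ)) : Prop :=
  (∀ p ∈ bs, 2 ≤ p.2) ∧ bs.IsChain (fun p q => p.1 ≠ q.1)

@[simp]
theorem blockString_append_singleton (bs : List (α × ℕ)) (x : α) (d : ℕ) :
    blockString (bs ++ [(x, d)]) = blockString bs ++ List.replicate d x := by
  simp [blockString]

@[simp]
theorem blockWeight_append_singleton (w : α → ℕ → ℝ) (bs : List (α × ℕ)) (x : α) (d : ℕ) :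
    blockWeight w (bs ++ [(x, d)]) = blockWeight w bs + w x d := by
  simp [blockWeight]

theorem isLDBlockList_nil : IsLDBlockList ([] : List (α × ℕ)) :=
  ⟨by simp, List.IsChain.nil⟩

theorem isLDBlockList_append_singleton {bs : List (α × ℕ)} {x : α} {d : ℕ} :
    IsLDBlockList (bs ++ [(x, d)]) ↔
      IsLDBlockList bs ∧ 2 ≤ d ∧ ∀ p ∈ bs.getLast?, p.1 ≠ x := by
  simp only [IsLDBlockList, List.mem_append, List.mem_singleton, or_imp, forall_and,
    forall_eq, List.isChain_append, List.isChain_singleton, List.head?_cons, Option.mem_def,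
    Option.some.injEq, forall_eq', true_and]
  tauto

end BlockList

section WeightedLDS

variable {α : Type*} {n : ℕ} {s : ℕ → α}

/-- The string `S[1..n]` with `S[t] = s t`; `(word n s).take i` is the prefix `S[1..i]`. -/
def word (n : ℕ) (s : ℕ → α) : List α :=
  (List.range n).map fun t => s (t + 1)

/-- The substring `S[y+1..i]`. -/
def substr (n : ℕ) (s : ℕ → α) (y i : ℕ) : List α :=
  ((word n s).take i).drop y

def candidates (s : ℕ → α) (W : ℕ → ℕ → ℝ) (T : ℕ → ℝ) (i : ℕ) : Set ℝ :=
  {r | ∃ y < i, (y = 0 ∨ s y ≠ s i) ∧ 0 < W (y + 1) i ∧ r = T y + W (y + 1) i}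

@[simp]
theorem length_word : (word n s).length = n := by
  simp [word]

theorem take_word_eq_append_substr {y i : ℕ} (h : y ≤ i) :
    (word n s).take i = (word n s).take y ++ substr n s y i := by
  conv_lhs => rw [← List.take_append_drop y ((word n s).take i)]
  rw [List.take_take, Nat.min_eq_left h, substr]

theorem substr_self (y : ℕ) : substr n s y y = [] := by
  simp [substr]

theorem substr_succ {y m : ℕ} (hy : y ≤ m) (hm : m < n) :
    substr n s y (m + 1) = substr n s y m ++ [s (m + 1)] := by
  rw [substr, substr, List.take_add_one, List.drop_append_of_le_length (by simp; omega)]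
  simp [word, hm]

variable [DecidableEq α] {w : α → ℕ → ℝ} {N : ℕ → ℕ → ℕ} {W : ℕ → ℕ → ℝ} {T : ℕ → ℝ}
  (hw : ∀ (x : α) (ℓ : ℕ), 2 ≤ ℓ → 0 < w x ℓ)
  (hN : ∀ i j : ℕ, 1 ≤ i → i ≤ j → j ≤ n →
    N i j = ((((word n s).drop (i - 1)).take (j - i + 1)).count (s j)))
  (hWpos : ∀ i j : ℕ, 1 ≤ i → i ≤ j → j ≤ n → 2 ≤ N i j →
    IsGreatest {r : ℝ | ∃ ℓ : ℕ, 2 ≤ ℓ ∧ ℓ ≤ N i j ∧ r = w (s j) ℓ} (W i j))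
  (hWzero : ∀ i j : ℕ, 1 ≤ i → i ≤ j → j ≤ n → N i j < 2 → W i j = 0)
  (hT0 : T 0 = 0)
  (hTmax : ∀ i : ℕ, 1 ≤ i → i ≤ n →
    (candidates s W T i).Nonempty → IsGreatest (candidates s W T i) (T i))
  (hTzero : ∀ i : ℕ, 1 ≤ i → i ≤ n → ¬ (candidates s W T i).Nonempty → T i = 0)

include hN in
theorem N_eq_count_substr {y i : ℕ} (hyi : y < i) (hi : i ≤ n) :
    N (y + 1) i = (substr n s y i).count (s i) := by
  rw [hN (y + 1) i (by omega) (by omega) hi, substr, List.drop_take,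
    show i - (y + 1) + 1 = i - y by omega, Nat.add_sub_cancel]

include hN hWpos in
theorem w_le_W {y i d : ℕ} (hyi : y < i) (hi : i ≤ n) (hd : 2 ≤ d)
    (hdi : d ≤ (substr n s y i).count (s i)) : w (s i) d ≤ W (y + 1) i := by
  rw [← N_eq_count_substr hN hyi hi] at hdi
  exact (hWpos (y + 1) i (by omega) (by omega) hi (by omega)).2 ⟨d, hd, hdi, rfl⟩

include hN hWpos hWzero in
theorem exists_W_eq {y i : ℕ} (hyi : y < i) (hi : i ≤ n) (hW : 0 < W (y + 1) i) :
    ∃ ℓ, 2 ≤ ℓ ∧ ℓ ≤ (substr n s y i).count (s i) ∧ W (y + 1) i = w (s i) ℓ := by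
  rw [← N_eq_count_substr hN hyi hi]
  have hN2 : 2 ≤ N (y + 1) i := by
    by_contra! h
    exact hW.ne' (hWzero (y + 1) i (by omega) (by omega) hi h)
  exact (hWpos (y + 1) i (by omega) (by omega) hi hN2).1

include hw hN hWpos hTmax in
theorem add_w_le_T {y i d : ℕ} (hyi : y < i) (hi : i ≤ n) (hy : y = 0 ∨ s y ≠ s i)
    (hd : 2 ≤ d) (hdi : d ≤ (substr n s y i).count (s i)) : T y + w (s i) d ≤ T i := by
  have hwW := w_le_W hN hWpos hyi hi hd hdi
  have hmem : T y + W (y + 1) i ∈ candidates s W T i :=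
    ⟨y, hyi, hy, (hw _ d hd).trans_le hwW, rfl⟩
  linarith [(hTmax i (by omega) hi ⟨_, hmem⟩).2 hmem]

include hw hN hWpos hTmax in
theorem exists_add_w_le_T {x : α} {y d : ℕ} (hy : y = 0 ∨ s y ≠ x) (hd : 2 ≤ d) :
    ∀ m, y ≤ m → m ≤ n → d ≤ (substr n s y m).count x →
      ∃ i, y < i ∧ i ≤ m ∧ s i = x ∧ T y + w x d ≤ T i := by
  intro m
  induction m with
  | zero =>
    intro hy0 _ hdm
    rw [Nat.le_zero.mp hy0, substr_self] at hdm
    simp at hdm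
    omega
  | succ m ih =>
    intro hym hmn hdm
    rcases Nat.eq_or_lt_of_le hym with rfl | hym
    · rw [substr_self] at hdm
      simp at hdm
      omega
    by_cases hx : s (m + 1) = x
    · subst hx
      exact ⟨m + 1, hym, le_rfl, rfl, add_w_le_T hw hN hWpos hTmax hym hmn hy hd hdm⟩
    · rw [substr_succ (by omega) (by omega)] at hdm
      obtain ⟨i, hyi, him, hsi, hle⟩ := ih (by omega) (by omega) (by simpa [hx] using hdm)
      exact ⟨i, hyi, by omega, hsi, hle⟩

include hw hN hWpos hT0 hTmax in
theorem exists_blockWeight_le_T (bs : List (α × ℕ)) {x : α} {d m : ℕ} (hm : m ≤ n)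
    (hbs : IsLDBlockList (bs ++ [(x, d)]))
    (hsub : (blockString (bs ++ [(x, d)])).Sublist ((word n s).take m)) :
    ∃ i ≤ m, s i = x ∧ blockWeight w (bs ++ [(x, d)]) ≤ T i := by
  induction bs using List.reverseRecOn generalizing x d m with
  | nil =>
    obtain ⟨-, hd, -⟩ := isLDBlockList_append_singleton.mp hbs
    have hdm : d ≤ (substr n s 0 m).count x := by
      simpa [substr, blockString, List.replicate_sublist_iff] using hsub
    obtain ⟨i, -, him, hsi, hle⟩ :=
      exists_add_w_le_T hw hN hWpos hTmax (Or.inl rfl) hd m (Nat.zero_le _) hm hdm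
    exact ⟨i, him, hsi, by simpa [blockWeight, hT0] using hle⟩
  | append_singleton bs p ih =>
    obtain ⟨x', d'⟩ := p
    obtain ⟨hbs', hd, hx'⟩ := isLDBlockList_append_singleton.mp hbs
    rw [blockString_append_singleton] at hsub
    obtain ⟨k, hk, hsub₁, hsub₂⟩ := List.exists_sublist_take_and_sublist_drop hsub
    have hkm : k ≤ m := by simp at hk; omega
    rw [List.take_take, Nat.min_eq_left hkm] at hsub₁
    obtain ⟨y, hyk, hsy, hle⟩ := ih (by omega) hbs' hsub₁
    have hdy : d ≤ (substr n s y m).count x :=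
      (List.replicate_sublist_iff.mp hsub₂).trans ((List.drop_sublist_drop_left _ hyk).count_le x)
    have hy : y = 0 ∨ s y ≠ x := Or.inr (hsy ▸ hx' (x', d') (by simp))
    obtain ⟨i, -, him, hsi, hle'⟩ :=
      exists_add_w_le_T hw hN hWpos hTmax hy hd m (by omega) hm hdy
    exact ⟨i, him, hsi, by rw [blockWeight_append_singleton]; linarith⟩

include hN hWpos hWzero hT0 hTmax hTzero in
theorem T_eq_zero_or_eq_blockWeight (i : ℕ) (hi : i ≤ n) :
    T i = 0 ∨ ∃ (bs : List (α × ℕ)) (d : ℕ), IsLDBlockList (bs ++ [(s i, d)]) ∧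
      (blockString (bs ++ [(s i, d)])).Sublist ((word n s).take i) ∧
      blockWeight w (bs ++ [(s i, d)]) = T i := by
  induction i using Nat.strong_induction_on with
  | _ i ih =>
  rcases Nat.eq_zero_or_pos i with rfl | hi0
  · exact Or.inl hT0
  by_cases hne : (candidates s W T i).Nonempty
  swap
  · exact Or.inl (hTzero i hi0 hi hne)
  obtain ⟨y, hyi, hy, hWy, hTi⟩ := (hTmax i hi0 hi hne).1
  obtain ⟨ℓ, hℓ, hℓi, hWℓ⟩ := exists_W_eq hN hWpos hWzero hyi hi hWy
  have hprefix : ∃ bs, IsLDBlockList bs ∧ (∀ p ∈ bs.getLast?, p.1 ≠ s i) ∧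
      (blockString bs).Sublist ((word n s).take y) ∧ blockWeight w bs = T y := by
    have hnil (h : T y = 0) : ∃ bs, IsLDBlockList bs ∧ (∀ p ∈ bs.getLast?, p.1 ≠ s i) ∧
        (blockString bs).Sublist ((word n s).take y) ∧ blockWeight w bs = T y :=
      ⟨[], isLDBlockList_nil, by simp, by simp [blockString], by simp [blockWeight, h]⟩
    rcases hy with rfl | hy
    · exact hnil hT0
    rcases ih y hyi (by omega) with h | ⟨bs, d, hbs, hsub, hwt⟩
    · exact hnil h
    · exact ⟨bs ++ [(s y, d)], hbs, by simpa using hy, hsub, hwt⟩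
  obtain ⟨bs, hbs, hlast, hsub, hwt⟩ := hprefix
  refine Or.inr ⟨bs, ℓ, isLDBlockList_append_singleton.mpr ⟨hbs, hℓ, hlast⟩, ?_, ?_⟩
  · rw [blockString_append_singleton, take_word_eq_append_substr hyi.le]
    exact hsub.append (List.replicate_sublist_iff.mpr hℓi)
  · rw [blockWeight_append_singleton, hwt, ← hWℓ, hTi]

end WeightedLDS

/-- Correctness of the `O(n²)` DP for Weighted-LDS. The string is `S[1..n]` with
`S[i] = s i`, and `w x ℓ > 0` is an arbitrary positive weight for each letter `x` and
`ℓ ≥ 2`. `N i j` is the number of occurrences of `S[j]` in `S[i..j]`; `W i j` is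
`max { w (S[j]) ℓ : 2 ≤ ℓ ≤ N i j }` if `N i j ≥ 2` and `0` otherwise; `T 0 = 0` and
`T i` is the maximum of `T y + W (y+1) i` over all `y < i` with (`y = 0` or `S[y] ≠ S[i]`)
and `W (y+1) i > 0` (and `T i = 0` if no such `y` exists). Then `max_{0 ≤ i ≤ n} T i`
equals the maximum total weight `∑ᵢ w xᵢ dᵢ` of an LD-subsequence
`x₁^{d₁} ⋯ x_k^{d_k}` of `S` (and `0` if `S` has no LD-subsequence). -/
theorem stmt_14 {α : Type*} [DecidableEq α] (n : ℕ) (s : ℕ → α)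
    (w : α → ℕ → ℝ) (hw : ∀ (x : α) (ℓ : ℕ), 2 ≤ ℓ → 0 < w x ℓ)
    (N : ℕ → ℕ → ℕ) (W : ℕ → ℕ → ℝ) (T : ℕ → ℝ)
    (hN : ∀ i j : ℕ, 1 ≤ i → i ≤ j → j ≤ n →
      N i j = (((((List.range n).map fun t => s (t + 1)).drop (i - 1)).take (j - i + 1)).count (s j)))
    (hWpos : ∀ i j : ℕ, 1 ≤ i → i ≤ j → j ≤ n → 2 ≤ N i j →
      IsGreatest {r : ℝ | ∃ ℓ : ℕ, 2 ≤ ℓ ∧ ℓ ≤ N i j ∧ r = w (s j) ℓ} (W i j))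
    (hWzero : ∀ i j : ℕ, 1 ≤ i → i ≤ j → j ≤ n → N i j < 2 → W i j = 0)
    (hT0 : T 0 = 0)
    (hTmax : ∀ i : ℕ, 1 ≤ i → i ≤ n →
      {r : ℝ | ∃ y : ℕ, y < i ∧ (y = 0 ∨ s y ≠ s i) ∧ 0 < W (y + 1) i ∧
          r = T y + W (y + 1) i}.Nonempty →
      IsGreatest {r : ℝ | ∃ y : ℕ, y < i ∧ (y = 0 ∨ s y ≠ s i) ∧ 0 < W (y + 1) i ∧
          r = T y + W (y + 1) i} (T i))
    (hTzero : ∀ i : ℕ, 1 ≤ i → i ≤ n →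
      ¬ {r : ℝ | ∃ y : ℕ, y < i ∧ (y = 0 ∨ s y ≠ s i) ∧ 0 < W (y + 1) i ∧
          r = T y + W (y + 1) i}.Nonempty →
      T i = 0) :
    ∃ Mx : ℝ,
      IsGreatest {r : ℝ | ∃ i : ℕ, i ≤ n ∧ r = T i} Mx ∧
      IsGreatest
        ({0} ∪ {r : ℝ | ∃ (l : List α) (bs : List (α × ℕ)),
          l.Sublist ((List.range n).map fun t => s (t + 1)) ∧ IsBlockDecomp bs l ∧
          r = (bs.map fun p => w p.1 p.2).sum})
        Mx := by
  obtain ⟨i₀, hi₀, hmax⟩ := (Finset.range (n + 1)).exists_max_image T ⟨0, by simp⟩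
  simp only [Finset.mem_range, Nat.lt_succ_iff] at hi₀ hmax
  refine ⟨T i₀, ⟨⟨i₀, hi₀, rfl⟩, ?_⟩, ?_, ?_⟩
  · rintro _ ⟨i, hi, rfl⟩
    exact hmax i hi
  · rcases T_eq_zero_or_eq_blockWeight hN hWpos hWzero hT0 hTmax hTzero i₀ hi₀ with
      h | ⟨bs, d, hbs, hsub, hwt⟩
    · exact Or.inl h
    · exact Or.inr ⟨_, bs ++ [(s i₀, d)], hsub.trans (List.take_sublist _ _),
        ⟨by simp, hbs.1, hbs.2, rfl⟩, hwt.symm⟩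
  · rintro _ (rfl | ⟨l, bs, hsub, ⟨hne, h2, hchain, rfl⟩, rfl⟩)
    · exact hT0 ▸ hmax 0 (Nat.zero_le _)
    obtain ⟨bs, ⟨x, d⟩, rfl⟩ := List.eq_nil_or_concat' bs |>.resolve_left hne
    rw [← List.take_length (l := (List.range n).map _), List.length_map,
      List.length_range] at hsub
    obtain ⟨i, hi, -, hle⟩ := exists_blockWeight_le_T hw hN hWpos hT0 hTmax bs le_rfl
      ⟨h2, hchain⟩ hsub
    exact hle.trans (hmax i hi)
end
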